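/- arXiv:2502.07916 — 5 statements merged into one kernel-verified Lean document; each statement's English description precedes it below -/
import Mathlib

section
/- Let q be a prime power, A ∈ 𝔽_q^{k×n}, m a positive integer, and let A' ∈ 𝔽_q^{(k+1)×n'} be the matrix obtained from A by the Construction. If A has full row rank k, then A' has full row rank k+1. -/
open scoped Classical

/-- A permutation matrix: exactly one `1` in each row and column, `0` elsewhere. -/
def IsPermMatrix {n : ℕ} {F : Type*} [Field F] (P : Matrix (Fin n) (Fin n) F) : Prop :=
  ∃ σ : Equiv.Perm (Fin n), ∀ i j, P i j = if i = σ j then 1 else 0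

/-- A signed permutation matrix: exactly one nonzero entry in each row and column,
each equal to `1` or `-1`. -/
def IsSignedPermMatrix {n : ℕ} {F : Type*} [Field F] (P : Matrix (Fin n) (Fin n) F) : Prop :=
  ∃ (σ : Equiv.Perm (Fin n)) (ε : Fin n → F),
    (∀ j, ε j = 1 ∨ ε j = -1) ∧ ∀ i j, P i j = if i = σ j then ε j else 0

/-- A monomial matrix: exactly one nonzero entry in each row and column. -/
def IsMonomialMatrix {n : ℕ} {F : Type*} [Field F] (P : Matrix (Fin n) (Fin n) F) : Prop :=
  ∃ (σ : Equiv.Perm (Fin n)) (d : Fin n → F),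
    (∀ j, d j ≠ 0) ∧ ∀ i j, P i j = if i = σ j then d j else 0

/-- Permutation Code Equivalence. -/
def PCE {k n : ℕ} {F : Type*} [Field F] (G H : Matrix (Fin k) (Fin n) F) : Prop :=
  ∃ (S : Matrix (Fin k) (Fin k) F) (P : Matrix (Fin n) (Fin n) F),
    IsUnit S ∧ IsPermMatrix P ∧ S * G * P = H

/-- Signed Permutation Code Equivalence. -/
def SPCE {k n : ℕ} {F : Type*} [Field F] (G H : Matrix (Fin k) (Fin n) F) : Prop :=
  ∃ (S : Matrix (Fin k) (Fin k) F) (P : Matrix (Fin n) (Fin n) F),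
    IsUnit S ∧ IsSignedPermMatrix P ∧ S * G * P = H

/-- Linear Code Equivalence. -/
def LCE {k n : ℕ} {F : Type*} [Field F] (G H : Matrix (Fin k) (Fin n) F) : Prop :=
  ∃ (S : Matrix (Fin k) (Fin k) F) (P : Matrix (Fin n) (Fin n) F),
    IsUnit S ∧ IsMonomialMatrix P ∧ S * G * P = H

/-- The number of column indices `j` such that the `j`-th column of `A` equals `c`. -/
noncomputable def colCount {k n : ℕ} {F : Type*} [Field F]
    (A : Matrix (Fin k) (Fin n) F) (c : Fin k → F) : ℕ :=
  (Finset.univ.filter fun j : Fin n => (fun i => A i j) = c).card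

/-- `m_A`: the maximum number of times a single column appears among the columns of `A`. -/
noncomputable def maxColCount {k n : ℕ} {F : Type*} [Field F] [Fintype F]
    (A : Matrix (Fin k) (Fin n) F) : ℕ :=
  Finset.univ.sup fun c : Fin k → F => colCount A c

/-- The Construction: `A' = [A'_1 | A'_2 | A'_3]` of size `(k+1) × (n + 2nm + 1)`, where
`A'_1` is `A` with a row of ones appended, `A'_2` is `Â` (each column of `A` repeated `m`
consecutive times) with a row of zeros appended, and `A'_3` has last row all ones and zeros
elsewhere. -/
def construct {k n : ℕ} {F : Type*} [Field F] (A : Matrix (Fin k) (Fin n) F) (m : ℕ) :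
    Matrix (Fin (k + 1)) (Fin (n + 2 * (n * m) + 1)) F :=
  fun i j =>
    if hj1 : (j : ℕ) < n then
      -- block A'_1
      if hi : (i : ℕ) < k then A ⟨i, hi⟩ ⟨j, hj1⟩ else 1
    else if hj2 : (j : ℕ) < n + n * m then
      -- block A'_2
      if hi : (i : ℕ) < k then
        A ⟨i, hi⟩ ⟨((j : ℕ) - n) / m, by
          have hm : 0 < m := by
            rcases Nat.eq_zero_or_pos m with h | h
            · subst h; omega
            · exact h
          exact (Nat.div_lt_iff_lt_mul hm).mpr (by omega)⟩
      else 0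
    else
      -- block A'_3
      if (i : ℕ) < k then 0 else 1

/-- if `A` has full row rank `k`, then `A'` (from the Construction) has full row
rank `k + 1`. -/
theorem stmt3 (q k n m : ℕ) (hq : IsPrimePow q) (hk : 0 < k) (hn : 0 < n) (hm : 0 < m)
    (F : Type*) [Field F] [Fintype F] (hF : Fintype.card F = q)
    (A : Matrix (Fin k) (Fin n) F)
    (hA : A.rank = k) :
    (construct A m).rank = k + 1 := by
  -- rows of A are linearly independent
  have hrowsA : LinearIndependent F A.row := by
    rw [linearIndependent_iff_card_eq_finrank_span]
    rw [Fintype.card_fin]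
    rw [Set.finrank, ← Matrix.rank_eq_finrank_span_row, hA]
  have hli : LinearIndependent F (construct A m).row := by
    rw [Fintype.linearIndependent_iff]
    intro g hg
    have hlast : g (Fin.last k) = 0 := by
      have h0 := congrFun hg ⟨n + 2 * (n * m), by omega⟩
      simp only [Finset.sum_apply, Pi.smul_apply, Pi.zero_apply, smul_eq_mul, Matrix.row_apply] at h0
      rw [Fin.sum_univ_castSucc] at h0
      have : ∀ i : Fin k, g i.castSucc *
          construct A m i.castSucc ⟨n + 2 * (n * m), by omega⟩ = 0 := by
        intro i
        have hi : (i.castSucc : ℕ) < k := i.isLt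
        simp [construct, hi]
        omega
      rw [Finset.sum_congr rfl (fun i _ => this i), Finset.sum_const_zero, zero_add] at h0
      have hk' : ¬ ((Fin.last k : ℕ) < k) := by simp
      simpa [construct, hk', show ¬ (n + 2 * (n * m) < n) by omega,
        show ¬ (n + 2 * (n * m) < n + n * m) by nlinarith] using h0
    have hsum : ∑ i : Fin k, g i.castSucc • A.row i = 0 := by
      funext j
      have h0 := congrFun hg ⟨(j : ℕ), by omega⟩
      simp only [Finset.sum_apply, Pi.smul_apply, Pi.zero_apply, smul_eq_mul, Matrix.row_apply] at h0
      rw [Fin.sum_univ_castSucc, hlast, zero_mul, add_zero] at h0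
      simp only [Finset.sum_apply, Pi.smul_apply, Pi.zero_apply, smul_eq_mul, Matrix.row_apply]
      rw [← h0]
      apply Finset.sum_congr rfl
      intro i _
      have hi : (i.castSucc : ℕ) < k := i.isLt
      simp [construct, hi, j.isLt]
    have hz : ∀ i : Fin k, g i.castSucc = 0 :=
      Fintype.linearIndependent_iff.mp hrowsA _ hsum
    intro i
    exact Fin.lastCases (motive := fun i => g i = 0) hlast hz i
  rw [hli.rank_matrix, Fintype.card_fin]
end

section
/- Let q be a prime power, G, H ∈ 𝔽_q^{k×n}, m a positive integer, and let G', H' ∈ 𝔽_q^{(k+1)×n'} be obtained from G and H by the Construction (with the same m). If (G, H) is in PCE, then (G', H') is in PCE. -/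
open scoped Classical

def pmapAux (n m : ℕ) (σ : Equiv.Perm (Fin n)) (j : ℕ) : ℕ :=
  if h1 : j < n then σ ⟨j, h1⟩
  else if _h2 : j < n + n * m then
    if h3 : (j - n) / m < n then n + (σ ⟨(j - n) / m, h3⟩) * m + (j - n) % m else j
  else j

lemma pmapAux_eq1 (n m : ℕ) (σ : Equiv.Perm (Fin n)) (j : ℕ) (h1 : j < n) :
    pmapAux n m σ j = σ ⟨j, h1⟩ := by simp [pmapAux, h1]

lemma pmapAux_eq2 (n m : ℕ) (σ : Equiv.Perm (Fin n)) (j : ℕ) (h1 : ¬ j < n)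
    (h2 : j < n + n * m) (h3 : (j - n) / m < n) :
    pmapAux n m σ j = n + (σ ⟨(j - n) / m, h3⟩) * m + (j - n) % m := by
  simp [pmapAux, h1, h2, h3]

lemma pmapAux_eq3 (n m : ℕ) (σ : Equiv.Perm (Fin n)) (j : ℕ) (h2 : ¬ j < n + n * m) :
    pmapAux n m σ j = j := by
  have h1 : ¬ j < n := by omega
  simp [pmapAux, h1, h2]

lemma div_lt_of_block2 {n m j : ℕ} (hm : 0 < m) (h1 : ¬ j < n) (h2 : j < n + n * m) :
    (j - n) / m < n :=
  (Nat.div_lt_iff_lt_mul hm).mpr (by omega)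

lemma block2_val_lt {n m : ℕ} (c : Fin n) (r : ℕ) (hr : r < m) :
    n + (c : ℕ) * m + r < n + n * m := by
  have h := Nat.mul_le_mul_right m c.isLt
  have h2 := Nat.succ_mul (c : ℕ) m
  omega

lemma mulm_div {m a r : ℕ} (hm : 0 < m) (hr : r < m) : (a * m + r) / m = a := by
  rw [mul_comm, Nat.mul_add_div hm, Nat.div_eq_of_lt hr, add_zero]

lemma mulm_mod {m a r : ℕ} (hr : r < m) : (a * m + r) % m = r := by
  rw [mul_comm, Nat.mul_add_mod, Nat.mod_eq_of_lt hr]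

lemma pmapAux_lt {n m : ℕ} (hm : 0 < m) (σ : Equiv.Perm (Fin n)) {j : ℕ}
    (hj : j < n + 2 * (n * m) + 1) : pmapAux n m σ j < n + 2 * (n * m) + 1 := by
  by_cases h1 : j < n
  · rw [pmapAux_eq1 n m σ j h1]
    have := (σ ⟨j, h1⟩).isLt; omega
  · by_cases h2 : j < n + n * m
    · have h3 := div_lt_of_block2 hm h1 h2
      rw [pmapAux_eq2 n m σ j h1 h2 h3]
      have := block2_val_lt (σ ⟨(j - n) / m, h3⟩) ((j - n) % m) (Nat.mod_lt _ hm)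
      omega
    · rw [pmapAux_eq3 n m σ j h2]; exact hj

lemma pmapAux_inj {n m : ℕ} (hm : 0 < m) (σ : Equiv.Perm (Fin n)) {a b : ℕ}
    (heq : pmapAux n m σ a = pmapAux n m σ b) : a = b := by
  by_cases h1a : a < n
  all_goals by_cases h2a : a < n + n * m
  all_goals by_cases h1b : b < n
  all_goals by_cases h2b : b < n + n * m
  all_goals try omega
  -- block1/block1
  · rw [pmapAux_eq1 n m σ a h1a, pmapAux_eq1 n m σ b h1b] at heq
    exact congrArg Fin.val (σ.injective (Fin.ext heq))
  -- block1 vs block2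
  · rw [pmapAux_eq1 n m σ a h1a,
        pmapAux_eq2 n m σ b h1b h2b (div_lt_of_block2 hm h1b h2b)] at heq
    have := (σ ⟨a, h1a⟩).isLt; omega
  -- block1 vs block3
  · rw [pmapAux_eq1 n m σ a h1a, pmapAux_eq3 n m σ b h2b] at heq
    have := (σ ⟨a, h1a⟩).isLt; omega
  -- block2 vs block1
  · rw [pmapAux_eq1 n m σ b h1b,
        pmapAux_eq2 n m σ a h1a h2a (div_lt_of_block2 hm h1a h2a)] at heq
    have := (σ ⟨b, h1b⟩).isLt; omega
  -- block2 vs block2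
  · have h3a := div_lt_of_block2 hm h1a h2a
    have h3b := div_lt_of_block2 hm h1b h2b
    rw [pmapAux_eq2 n m σ a h1a h2a h3a, pmapAux_eq2 n m σ b h1b h2b h3b] at heq
    have hra : (a - n) % m < m := Nat.mod_lt _ hm
    have hrb : (b - n) % m < m := Nat.mod_lt _ hm
    have heq' : ((σ ⟨(a - n) / m, h3a⟩ : ℕ)) * m + (a - n) % m
        = ((σ ⟨(b - n) / m, h3b⟩ : ℕ)) * m + (b - n) % m := by omega
    have hdiv : ((σ ⟨(a - n) / m, h3a⟩ : ℕ)) = ((σ ⟨(b - n) / m, h3b⟩ : ℕ)) := by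
      have := congrArg (· / m) heq'
      simpa [mulm_div hm hra, mulm_div hm hrb] using this
    have hmod : (a - n) % m = (b - n) % m := by
      have := congrArg (· % m) heq'
      simpa [mulm_mod hra, mulm_mod hrb] using this
    have hdd : (a - n) / m = (b - n) / m :=
      congrArg Fin.val (σ.injective (Fin.ext hdiv))
    have ha' := Nat.div_add_mod (a - n) m
    have hb' := Nat.div_add_mod (b - n) m
    rw [hdd, hmod] at ha'
    omega
  -- block2 vs block3
  · have h3a := div_lt_of_block2 hm h1a h2a
    rw [pmapAux_eq2 n m σ a h1a h2a h3a, pmapAux_eq3 n m σ b h2b] at heq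
    have := block2_val_lt (σ ⟨(a - n) / m, h3a⟩) ((a - n) % m) (Nat.mod_lt _ hm)
    omega
  -- block3 vs block1
  · rw [pmapAux_eq1 n m σ b h1b, pmapAux_eq3 n m σ a h2a] at heq
    have := (σ ⟨b, h1b⟩).isLt; omega
  -- block3 vs block2
  · have h3b := div_lt_of_block2 hm h1b h2b
    rw [pmapAux_eq2 n m σ b h1b h2b h3b, pmapAux_eq3 n m σ a h2a] at heq
    have := block2_val_lt (σ ⟨(b - n) / m, h3b⟩) ((b - n) % m) (Nat.mod_lt _ hm)
    omega
  -- block3 vs block3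
  · rw [pmapAux_eq3 n m σ a h2a, pmapAux_eq3 n m σ b h2b] at heq
    exact heq


/-- right-multiplication by a permutation matrix permutes columns -/
lemma mul_perm_apply {F : Type*} [Field F] {a b : ℕ} (X : Matrix (Fin a) (Fin b) F)
    (σ : Equiv.Perm (Fin b)) (i : Fin a) (j : Fin b) :
    (X * Matrix.of fun p q => if p = σ q then (1 : F) else 0) i j = X i (σ j) := by
  simp [Matrix.mul_apply]

/-- extend a `k × k` matrix to `(k+1) × (k+1)` by adding a `1` in the corner -/
def ext1 {k : ℕ} {F : Type*} [Field F] (S : Matrix (Fin k) (Fin k) F) :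
    Matrix (Fin (k + 1)) (Fin (k + 1)) F :=
  fun i i' =>
    if hi : (i : ℕ) < k then (if hi' : (i' : ℕ) < k then S ⟨i, hi⟩ ⟨i', hi'⟩ else 0)
    else (if (i' : ℕ) < k then 0 else 1)

lemma ext1_mul {k : ℕ} {F : Type*} [Field F] (S T : Matrix (Fin k) (Fin k) F) :
    ext1 S * ext1 T = ext1 (S * T) := by
  ext i j
  rw [Matrix.mul_apply, Fin.sum_univ_castSucc]
  by_cases hi : (i : ℕ) < k
  all_goals by_cases hj : (j : ℕ) < k
  · have : ∀ l : Fin k, ext1 S i l.castSucc * ext1 T l.castSucc j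
        = S ⟨i, hi⟩ l * T l ⟨j, hj⟩ := by
      intro l
      simp [ext1, hi, hj, l.isLt]
    simp only [this]
    have hlast : ext1 S i (Fin.last k) = 0 := by simp [ext1, hi]
    rw [hlast, zero_mul, add_zero]
    simp [ext1, hi, hj, Matrix.mul_apply]
  · have : ∀ l : Fin k, ext1 S i l.castSucc * ext1 T l.castSucc j = 0 := by
      intro l; simp [ext1, hi, hj, l.isLt]
    simp only [this]
    have hlast : ext1 S i (Fin.last k) = 0 := by simp [ext1, hi]
    simp [ext1, hi, hj, hlast]
  · have : ∀ l : Fin k, ext1 S i l.castSucc * ext1 T l.castSucc j = 0 := by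
      intro l; simp [ext1, hi, hj, l.isLt]
    simp only [this]
    have hlast : ext1 T (Fin.last k) j = 0 := by simp [ext1, hj]
    simp [ext1, hi, hj, hlast]
  · have : ∀ l : Fin k, ext1 S i l.castSucc * ext1 T l.castSucc j = 0 := by
      intro l; simp [ext1, hi, hj, l.isLt]
    simp only [this]
    simp [ext1, hi, hj]

lemma ext1_one {k : ℕ} {F : Type*} [Field F] : ext1 (1 : Matrix (Fin k) (Fin k) F) = 1 := by
  ext i j
  by_cases hi : (i : ℕ) < k
  all_goals by_cases hj : (j : ℕ) < k
  · simp [ext1, hi, hj, Matrix.one_apply, Fin.ext_iff]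
  · have hne : i ≠ j := fun e => hj (by rw [← e]; exact hi)
    simp [ext1, hi, hj, Matrix.one_apply, hne]
  · have hne : i ≠ j := fun e => hi (by rw [e]; exact hj)
    simp [ext1, hi, hj, Matrix.one_apply, hne]
  · have : i = j := Fin.ext (by omega)
    simp [ext1, hi, hj, Matrix.one_apply, this]

lemma ext1_isUnit {k : ℕ} {F : Type*} [Field F] {S : Matrix (Fin k) (Fin k) F}
    (hS : IsUnit S) : IsUnit (ext1 S) := by
  obtain ⟨u, hu⟩ := hS
  have h1 : S * ((u⁻¹ : _) : Matrix (Fin k) (Fin k) F) = 1 := by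
    rw [← hu]; exact u.mul_inv
  have h2 : ((u⁻¹ : _) : Matrix (Fin k) (Fin k) F) * S = 1 := by
    rw [← hu]; exact u.inv_mul
  refine ⟨⟨ext1 S, ext1 ((u⁻¹ : _) : Matrix (Fin k) (Fin k) F), ?_, ?_⟩, rfl⟩
  · rw [ext1_mul, h1, ext1_one]
  · rw [ext1_mul, h2, ext1_one]

section constructLemmas
variable {k n : ℕ} {F : Type*} [Field F] (A : Matrix (Fin k) (Fin n) F) (m : ℕ)
variable (i : Fin (k + 1)) (j : Fin (n + 2 * (n * m) + 1))

lemma construct_b1 (hi : (i : ℕ) < k) (h1 : (j : ℕ) < n) :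
    construct A m i j = A ⟨i, hi⟩ ⟨j, h1⟩ := by
  simp only [construct]; rw [dif_pos h1, dif_pos hi]

lemma construct_b1' (hi : ¬ (i : ℕ) < k) (h1 : (j : ℕ) < n) :
    construct A m i j = 1 := by
  simp only [construct]; rw [dif_pos h1, dif_neg hi]

lemma construct_b2 (hi : (i : ℕ) < k) (h1 : ¬ (j : ℕ) < n) (h2 : (j : ℕ) < n + n * m)
    (c : Fin n) (hc : ((j : ℕ) - n) / m = (c : ℕ)) :
    construct A m i j = A ⟨i, hi⟩ c := by
  simp only [construct]; rw [dif_neg h1, dif_pos h2, dif_pos hi]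
  exact congrArg _ (Fin.ext hc)

lemma construct_b2' (hi : ¬ (i : ℕ) < k) (h1 : ¬ (j : ℕ) < n) (h2 : (j : ℕ) < n + n * m) :
    construct A m i j = 0 := by
  simp only [construct]; rw [dif_neg h1, dif_pos h2, dif_neg hi]

lemma construct_b3 (hi : (i : ℕ) < k) (h2 : ¬ (j : ℕ) < n + n * m) :
    construct A m i j = 0 := by
  have h1 : ¬ (j : ℕ) < n := by omega
  simp only [construct]; rw [dif_neg h1, dif_neg h2, if_pos hi]

lemma construct_b3' (hi : ¬ (i : ℕ) < k) (h2 : ¬ (j : ℕ) < n + n * m) :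
    construct A m i j = 1 := by
  have h1 : ¬ (j : ℕ) < n := by omega
  simp only [construct]; rw [dif_neg h1, dif_neg h2, if_neg hi]

end constructLemmas

/-- if `(G, H)` is in PCE, then `(G', H')` is in PCE. -/
theorem stmt4 (q k n m : ℕ) (hq : IsPrimePow q) (hk : 0 < k) (hn : 0 < n) (hm : 0 < m)
    (F : Type*) [Field F] [Fintype F] (hF : Fintype.card F = q)
    (G H : Matrix (Fin k) (Fin n) F)
    (h : PCE G H) :
    PCE (construct G m) (construct H m) := by
  classical
  obtain ⟨S, P, hS, ⟨σ, hP⟩, hSGP⟩ := h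
  have hPof : P = Matrix.of fun p q => if p = σ q then (1 : F) else 0 := by
    ext p q; simp [hP]
  have hH : ∀ (a : Fin k) (b : Fin n), H a b = ∑ l, S a l * G l (σ b) := by
    intro a b
    conv_lhs => rw [← hSGP, hPof]
    rw [mul_perm_apply]
    simp [Matrix.mul_apply]
  -- the column permutation
  set N := n + 2 * (n * m) + 1 with hN
  let f : Fin N → Fin N := fun j => ⟨pmapAux n m σ j, pmapAux_lt hm σ j.isLt⟩
  have hfinj : Function.Injective f := by
    intro a b hab
    exact Fin.ext (pmapAux_inj hm σ (congrArg Fin.val hab))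
  let σ' : Equiv.Perm (Fin N) :=
    Equiv.ofBijective f ((Finite.injective_iff_bijective).mp hfinj)
  have hσ' : ∀ j : Fin N, (σ' j : ℕ) = pmapAux n m σ (j : ℕ) := fun j => rfl
  refine ⟨ext1 S, Matrix.of fun p q => if p = σ' q then (1 : F) else 0,
    ext1_isUnit hS, ⟨σ', fun i j => rfl⟩, ?_⟩
  ext i j
  rw [mul_perm_apply, Matrix.mul_apply, Fin.sum_univ_castSucc]
  have hlastv : ((Fin.last k : Fin (k + 1)) : ℕ) = k := rfl
  have hcs : ∀ l : Fin k, ((l.castSucc : Fin (k + 1)) : ℕ) = (l : ℕ) := fun l => rfl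
  by_cases h1 : (j : ℕ) < n
  · -- block 1
    have hv : (σ' j : ℕ) = (σ ⟨j, h1⟩ : ℕ) := by
      rw [hσ', pmapAux_eq1 n m σ j h1]
    have hv1 : (σ' j : ℕ) < n := by rw [hv]; exact (σ ⟨j, h1⟩).isLt
    by_cases hi : (i : ℕ) < k
    · rw [construct_b1 H m i j hi h1]
      have hterm : ∀ l : Fin k,
          ext1 S i l.castSucc * construct G m l.castSucc (σ' j)
            = S ⟨i, hi⟩ l * G l (σ ⟨j, h1⟩) := by
        intro l
        rw [construct_b1 G m l.castSucc (σ' j) (by rw [hcs]; exact l.isLt) hv1]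
        congr 1
        · simp [ext1, hi, l.isLt]
        · exact congrArg _ (Fin.ext hv)
      have hlast : ext1 S i (Fin.last k) = 0 := by simp [ext1, hi]
      simp only [hterm, hlast, zero_mul, add_zero]
      exact (hH ⟨i, hi⟩ ⟨j, h1⟩).symm
    · rw [construct_b1' H m i j hi h1]
      have hterm : ∀ l : Fin k,
          ext1 S i l.castSucc * construct G m l.castSucc (σ' j) = 0 := by
        intro l
        have : ext1 S i l.castSucc = 0 := by simp [ext1, hi, l.isLt]
        rw [this, zero_mul]
      have hlast : ext1 S i (Fin.last k) = 1 := by simp [ext1, hi]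
      rw [construct_b1' G m (Fin.last k) (σ' j) (by omega) hv1]
      simp only [hterm, hlast, one_mul, Finset.sum_const_zero, zero_add]
  · by_cases h2 : (j : ℕ) < n + n * m
    · -- block 2
      have h3 := div_lt_of_block2 hm h1 h2
      set c : Fin n := ⟨((j : ℕ) - n) / m, h3⟩ with hc
      have hv : (σ' j : ℕ) = n + (σ c : ℕ) * m + ((j : ℕ) - n) % m := by
        rw [hσ', pmapAux_eq2 n m σ j h1 h2 h3]
      have hr : ((j : ℕ) - n) % m < m := Nat.mod_lt _ hm
      have hv2 : ¬ (σ' j : ℕ) < n := by omega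
      have hv2' : (σ' j : ℕ) < n + n * m := by
        have := block2_val_lt (σ c) (((j : ℕ) - n) % m) hr; omega
      have hdv : ((σ' j : ℕ) - n) / m = ((σ c : ℕ)) := by
        rw [hv]
        have : n + (σ c : ℕ) * m + ((j : ℕ) - n) % m - n
            = (σ c : ℕ) * m + ((j : ℕ) - n) % m := by omega
        rw [this, mulm_div hm hr]
      by_cases hi : (i : ℕ) < k
      · rw [construct_b2 H m i j hi h1 h2 c rfl]
        have hterm : ∀ l : Fin k,
            ext1 S i l.castSucc * construct G m l.castSucc (σ' j)
              = S ⟨i, hi⟩ l * G l (σ c) := by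
          intro l
          rw [construct_b2 G m l.castSucc (σ' j) (by rw [hcs]; exact l.isLt) hv2 hv2'
            (σ c) hdv]
          congr 1
          simp [ext1, hi, l.isLt]
        have hlast : ext1 S i (Fin.last k) = 0 := by simp [ext1, hi]
        simp only [hterm, hlast, zero_mul, add_zero]
        exact (hH ⟨i, hi⟩ c).symm
      · rw [construct_b2' H m i j hi h1 h2]
        have hterm : ∀ l : Fin k,
            ext1 S i l.castSucc * construct G m l.castSucc (σ' j) = 0 := by
          intro l
          have : ext1 S i l.castSucc = 0 := by simp [ext1, hi, l.isLt]
          rw [this, zero_mul]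
        have hlast : ext1 S i (Fin.last k) = 1 := by simp [ext1, hi]
        rw [construct_b2' G m (Fin.last k) (σ' j) (by omega) hv2 hv2']
        simp only [hterm, hlast, one_mul, Finset.sum_const_zero, zero_add, mul_zero]
    · -- block 3
      have hv : (σ' j : ℕ) = (j : ℕ) := by rw [hσ', pmapAux_eq3 n m σ j h2]
      have hv2 : ¬ (σ' j : ℕ) < n + n * m := by omega
      by_cases hi : (i : ℕ) < k
      · rw [construct_b3 H m i j hi h2]
        have hterm : ∀ l : Fin k,
            ext1 S i l.castSucc * construct G m l.castSucc (σ' j) = 0 := by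
          intro l
          rw [construct_b3 G m l.castSucc (σ' j) (by rw [hcs]; exact l.isLt) hv2, mul_zero]
        have hlast : ext1 S i (Fin.last k) = 0 := by simp [ext1, hi]
        simp only [hterm, hlast, zero_mul, add_zero, Finset.sum_const_zero]
      · rw [construct_b3' H m i j hi h2]
        have hterm : ∀ l : Fin k,
            ext1 S i l.castSucc * construct G m l.castSucc (σ' j) = 0 := by
          intro l
          rw [construct_b3 G m l.castSucc (σ' j) (by rw [hcs]; exact l.isLt) hv2, mul_zero]
        have hlast : ext1 S i (Fin.last k) = 1 := by simp [ext1, hi]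
        rw [construct_b3' G m (Fin.last k) (σ' j) (by omega) hv2]
        simp only [hterm, hlast, one_mul, Finset.sum_const_zero, zero_add]
end

section
/- Let q be a prime power and G, H ∈ 𝔽_q^{k×n} be matrices with no zero columns. Let m be a positive integer with m > m_G and m > m_H, and let G', H' ∈ 𝔽_q^{(k+1)×n'} be obtained from G and H by the Construction (with this m). Suppose S'·G'·M' = H' for some invertible S' ∈ GL_{k+1}(𝔽_q) and monomial matrix M' = D'·P' ∈ 𝔽_q^{n'×n'} with D' invertible diagonal and P' a permutation matrix. Then the permutation σ_{P'} : [n'] → [n'] satisfies: (i) σ_{P'}(i) ∈ [1, n] for every i ∈ [1, n]; (ii) σ_{P'}(i) ∈ [n+1, n+nm] for every i ∈ [n+1, n+nm]; (iii) σ_{P'}(i) ∈ [n+nm+1, n'] for every i ∈ [n+nm+1, n']. -/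
open scoped Classical

section AuxPCE

variable {k n m : ℕ} {F : Type*} [Field F]

/-- Proportionality of two vectors. -/
def PropRel {K : Type*} {F : Type*} [Field F] (v w : K → F) : Prop :=
  ∃ l : F, l ≠ 0 ∧ v = l • w

lemma PropRel.refl {K : Type*} (v : K → F) : PropRel v v :=
  ⟨1, one_ne_zero, (one_smul F v).symm⟩

lemma PropRel.apply {K : Type*} {v w : K → F} (h : PropRel v w) :
    ∃ l : F, l ≠ 0 ∧ ∀ a, v a = l * w a := by
  obtain ⟨l, hl, hv⟩ := h
  exact ⟨l, hl, fun a => by rw [hv]; rfl⟩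

/-- evaluation of `construct` in block 1 -/
lemma construct_blk1 (A : Matrix (Fin k) (Fin n) F) {j : Fin (n + 2 * (n * m) + 1)}
    (hj : (j : ℕ) < n) (a : Fin (k + 1)) :
    construct A m a j = if ha : (a : ℕ) < k then A ⟨a, ha⟩ ⟨j, hj⟩ else 1 := by
  simp [construct, hj]

/-- evaluation of `construct` in block 2 -/
lemma construct_blk2 (A : Matrix (Fin k) (Fin n) F) {j : Fin (n + 2 * (n * m) + 1)}
    (hj1 : n ≤ (j : ℕ)) (hj2 : (j : ℕ) < n + n * m) (hdiv : ((j : ℕ) - n) / m < n)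
    (a : Fin (k + 1)) :
    construct A m a j = if ha : (a : ℕ) < k then A ⟨a, ha⟩ ⟨((j : ℕ) - n) / m, hdiv⟩ else 0 := by
  unfold construct
  rw [dif_neg (by omega), dif_pos hj2]

/-- evaluation of `construct` in block 3 -/
lemma construct_blk3 (A : Matrix (Fin k) (Fin n) F) {j : Fin (n + 2 * (n * m) + 1)}
    (hj : n + n * m ≤ (j : ℕ)) (a : Fin (k + 1)) :
    construct A m a j = if (a : ℕ) < k then 0 else 1 := by
  unfold construct
  rw [dif_neg (by omega), dif_neg (by omega)]

/-- the last row index -/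
def lastRow (k : ℕ) : Fin (k + 1) := ⟨k, Nat.lt_succ_self k⟩

lemma lastRow_not_lt : ¬ ((lastRow k : ℕ) < k) := by simp [lastRow]

/-- Columns related by `PropRel` lie in the same block. -/
lemma rel_same_block (A : Matrix (Fin k) (Fin n) F)
    (hAnz : ∀ j, (fun i => A i j) ≠ 0) (hm : 0 < m) (hk : 0 < k)
    {i j : Fin (n + 2 * (n * m) + 1)}
    (h : PropRel (fun a => construct A m a i) (fun a => construct A m a j)) :
    ((i : ℕ) < n ↔ (j : ℕ) < n) ∧
    ((n ≤ (i : ℕ) ∧ (i : ℕ) < n + n * m) ↔ (n ≤ (j : ℕ) ∧ (j : ℕ) < n + n * m)) := by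
  obtain ⟨l, hl, hv⟩ := h.apply
  have hlast := hv (lastRow k)
  rcases lt_or_ge (i : ℕ) n with hi1 | hi1
  · rcases lt_or_ge (j : ℕ) n with hj1 | hj1
    · exact ⟨by omega, by omega⟩
    · rcases lt_or_ge (j : ℕ) (n + n * m) with hj2 | hj2
      · -- i in block 1, j in block 2 : last entries 1 vs 0
        exfalso
        have hdiv : ((j : ℕ) - n) / m < n := (Nat.div_lt_iff_lt_mul hm).mpr (by omega)
        rw [construct_blk1 A hi1, construct_blk2 A hj1 hj2 hdiv] at hlast
        rw [dif_neg lastRow_not_lt, dif_neg lastRow_not_lt] at hlast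
        simp at hlast
      · -- i in block 1, j in block 3 : top of i must vanish
        exfalso
        have htop : ∀ a : Fin k, A a ⟨i, hi1⟩ = 0 := by
          intro a
          have := hv ⟨a, by omega⟩
          rw [construct_blk1 A hi1, construct_blk3 A hj2] at this
          simp only [show ((⟨(a:ℕ), by omega⟩ : Fin (k+1)) : ℕ) < k from a.2, dif_pos,
            if_pos] at this
          simpa using this
        exact hAnz ⟨i, hi1⟩ (funext fun a => htop a)
  · rcases lt_or_ge (i : ℕ) (n + n * m) with hi2 | hi2
    · rcases lt_or_ge (j : ℕ) n with hj1 | hj1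
      · -- i block 2, j block 1 : last entries 0 vs 1, l = 0
        exfalso
        have hdiv : ((i : ℕ) - n) / m < n := (Nat.div_lt_iff_lt_mul hm).mpr (by omega)
        rw [construct_blk2 A hi1 hi2 hdiv, construct_blk1 A hj1] at hlast
        rw [dif_neg lastRow_not_lt, dif_neg lastRow_not_lt] at hlast
        simp at hlast
        exact hl (by rw [hlast])
      · rcases lt_or_ge (j : ℕ) (n + n * m) with hj2 | hj2
        · exact ⟨by omega, by omega⟩
        · -- i block 2, j block 3 : last entries 0 vs 1, l = 0
          exfalso
          have hdiv : ((i : ℕ) - n) / m < n := (Nat.div_lt_iff_lt_mul hm).mpr (by omega)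
          rw [construct_blk2 A hi1 hi2 hdiv, construct_blk3 A hj2] at hlast
          rw [dif_neg lastRow_not_lt, if_neg lastRow_not_lt] at hlast
          simp at hlast
          exact hl (by rw [hlast])
    · rcases lt_or_ge (j : ℕ) n with hj1 | hj1
      · -- i block 3, j block 1 : top of j must vanish
        exfalso
        have htop : ∀ a : Fin k, A a ⟨j, hj1⟩ = 0 := by
          intro a
          have := hv ⟨a, by omega⟩
          rw [construct_blk3 A hi2, construct_blk1 A hj1] at this
          simp only [show ((⟨(a:ℕ), by omega⟩ : Fin (k+1)) : ℕ) < k from a.2, dif_pos,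
            if_pos] at this
          have : l * A a ⟨j, hj1⟩ = 0 := this.symm
          rcases mul_eq_zero.mp this with h | h
          · exact absurd h hl
          · exact h
        exact hAnz ⟨j, hj1⟩ (funext fun a => htop a)
      · rcases lt_or_ge (j : ℕ) (n + n * m) with hj2 | hj2
        · -- i block 3, j block 2 : last entries 1 vs 0
          exfalso
          have hdiv : ((j : ℕ) - n) / m < n := (Nat.div_lt_iff_lt_mul hm).mpr (by omega)
          rw [construct_blk3 A hi2, construct_blk2 A hj1 hj2 hdiv] at hlast
          rw [if_neg lastRow_not_lt, dif_neg lastRow_not_lt] at hlast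
          simp at hlast
        · exact ⟨by omega, by omega⟩

/-- size of the proportionality class of column `j` of `construct A m`. -/
noncomputable def cnt (A : Matrix (Fin k) (Fin n) F) (m : ℕ)
    (j : Fin (n + 2 * (n * m) + 1)) : ℕ :=
  (Finset.univ.filter fun i =>
    PropRel (fun a => construct A m a i) (fun a => construct A m a j)).card

lemma cnt_pos (A : Matrix (Fin k) (Fin n) F) (j : Fin (n + 2 * (n * m) + 1)) :
    1 ≤ cnt A m j := by
  unfold cnt
  exact Finset.card_pos.mpr ⟨j, Finset.mem_filter.mpr ⟨Finset.mem_univ _, PropRel.refl _⟩⟩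

lemma cnt_blk3 (A : Matrix (Fin k) (Fin n) F)
    (hAnz : ∀ j, (fun i => A i j) ≠ 0) (hm : 0 < m) (hk : 0 < k)
    {j : Fin (n + 2 * (n * m) + 1)} (hj : n + n * m ≤ (j : ℕ)) :
    cnt A m j = n * m + 1 := by
  have hset : (Finset.univ.filter fun i : Fin (n + 2 * (n * m) + 1) =>
      PropRel (fun a => construct A m a i) (fun a => construct A m a j)) =
      Finset.univ.filter fun i : Fin (n + 2 * (n * m) + 1) => n + n * m ≤ (i : ℕ) := by
    ext i
    simp only [Finset.mem_filter, Finset.mem_univ, true_and]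
    constructor
    · intro h
      have hb := rel_same_block A hAnz hm hk h
      have h1 : ¬ ((i : ℕ) < n) := fun hi => by have := hb.1.mp hi; omega
      have h2 : ¬ (n ≤ (i : ℕ) ∧ (i : ℕ) < n + n * m) := fun hi => by
        have := hb.2.mp hi; omega
      omega
    · intro hi
      have : (fun a => construct A m a i) = (fun a => construct A m a j) := by
        funext a
        rw [construct_blk3 A hi, construct_blk3 A hj]
      rw [this]
      exact PropRel.refl _
  unfold cnt
  rw [hset, ← Finset.card_range (n * m + 1)]
  refine Finset.card_bij' (t := Finset.range (n * m + 1))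
    (fun a _ => (a : ℕ) - (n + n * m))
    (fun b hb => ⟨n + n * m + b, by simp only [Finset.mem_range] at hb; omega⟩)
    ?_ ?_ ?_ ?_
  · intro a ha
    simp only [Finset.mem_filter, Finset.mem_univ, true_and] at ha
    simp only [Finset.mem_range]
    omega
  · intro b hb
    simp only [Finset.mem_range] at hb
    simp only [Finset.mem_filter, Finset.mem_univ, true_and]
    omega
  · intro a ha
    simp only [Finset.mem_filter, Finset.mem_univ, true_and] at ha
    apply Fin.ext
    simp only []
    omega
  · intro b hb
    simp only [Finset.mem_range] at hb
    simp only []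
    omega

lemma cnt_blk1 (A : Matrix (Fin k) (Fin n) F) [Fintype F]
    (hAnz : ∀ j, (fun i => A i j) ≠ 0) (hm : 0 < m) (hk : 0 < k)
    {j : Fin (n + 2 * (n * m) + 1)} (hj : (j : ℕ) < n) :
    cnt A m j ≤ maxColCount A := by
  have hcard : cnt A m j = colCount A (fun a => A a ⟨j, hj⟩) := by
    unfold cnt colCount
    refine Finset.card_bij'
      (fun a ha => (⟨(a : ℕ), by
        have := Finset.mem_filter.mp ha
        have := (rel_same_block A hAnz hm hk this.2).1.mpr hj
        exact this⟩ : Fin n))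
      (fun b _ => ⟨(b : ℕ), by omega⟩) ?_ ?_ ?_ ?_
    · intro a ha
      simp only [Finset.mem_filter, Finset.mem_univ, true_and] at ha ⊢
      have ha1 : (a : ℕ) < n := (rel_same_block A hAnz hm hk ha).1.mpr hj
      obtain ⟨l, hl, hv⟩ := ha.apply
      have hlast := hv (lastRow k)
      rw [construct_blk1 A ha1, construct_blk1 A hj] at hlast
      rw [dif_neg lastRow_not_lt, dif_neg lastRow_not_lt] at hlast
      have hl1 : l = 1 := by
        have : (1 : F) = l * 1 := hlast
        simpa using this.symm
      funext b
      have := hv ⟨b, by omega⟩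
      rw [construct_blk1 A ha1, construct_blk1 A hj] at this
      rw [dif_pos b.2, dif_pos b.2] at this
      simpa [hl1] using this
    · intro b hb
      simp only [Finset.mem_filter, Finset.mem_univ, true_and] at hb ⊢
      refine ⟨1, one_ne_zero, ?_⟩
      funext a
      have hvb : ∀ c : Fin k, A c ⟨(b : ℕ), b.2⟩ = A c ⟨j, hj⟩ := by
        intro c
        exact congrFun hb c
      rw [Pi.smul_apply, smul_eq_mul, one_mul]
      rw [construct_blk1 A (show ((⟨(b:ℕ), by omega⟩ : Fin (n + 2*(n*m)+1)) : ℕ) < n from b.2),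
        construct_blk1 A hj]
      by_cases ha : (a : ℕ) < k
      · rw [dif_pos ha, dif_pos ha]
        exact hvb ⟨a, ha⟩
      · rw [dif_neg ha, dif_neg ha]
    · intro a ha
      apply Fin.ext
      rfl
    · intro b hb
      apply Fin.ext
      rfl
  rw [hcard, maxColCount]
  exact Finset.le_sup (Finset.mem_univ _)

lemma cnt_blk2 (A : Matrix (Fin k) (Fin n) F)
    (hAnz : ∀ j, (fun i => A i j) ≠ 0) (hm : 0 < m) (hk : 0 < k)
    {j : Fin (n + 2 * (n * m) + 1)} (hj1 : n ≤ (j : ℕ)) (hj2 : (j : ℕ) < n + n * m) :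
    m ∣ cnt A m j := by
  have hdivj : ((j : ℕ) - n) / m < n := (Nat.div_lt_iff_lt_mul hm).mpr (by omega)
  set tj : Fin n := ⟨((j : ℕ) - n) / m, hdivj⟩ with htj
  have hcard : cnt A m j =
      ((Finset.univ.filter fun t : Fin n =>
        PropRel (fun a => A a t) (fun a => A a tj)) ×ˢ Finset.range m).card := by
    unfold cnt
    refine Finset.card_bij'
      (fun a ha => ((⟨((a : ℕ) - n) / m, by
        have h2 := (rel_same_block A hAnz hm hk (Finset.mem_filter.mp ha).2).2.mpr ⟨hj1, hj2⟩
        exact (Nat.div_lt_iff_lt_mul hm).mpr (by omega)⟩ : Fin n), ((a : ℕ) - n) % m))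
      (fun b hb => ⟨n + m * (b.1 : ℕ) + b.2, by
        have hb' := Finset.mem_product.mp hb
        have hb2 : (b.2 : ℕ) < m := Finset.mem_range.mp hb'.2
        have : m * ((b.1 : ℕ) + 1) ≤ m * n := Nat.mul_le_mul_left m (by omega)
        simp only [Nat.mul_add, Nat.mul_one] at this
        have hmn : m * n = n * m := Nat.mul_comm m n
        omega⟩) ?_ ?_ ?_ ?_
    · intro a ha
      simp only [Finset.mem_filter, Finset.mem_univ, true_and] at ha
      have hblk := (rel_same_block A hAnz hm hk ha).2.mpr ⟨hj1, hj2⟩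
      have hdiva : ((a : ℕ) - n) / m < n := (Nat.div_lt_iff_lt_mul hm).mpr (by omega)
      rw [Finset.mem_product]
      constructor
      · simp only [Finset.mem_filter, Finset.mem_univ, true_and]
        obtain ⟨l, hl, hv⟩ := ha.apply
        refine ⟨l, hl, ?_⟩
        funext c
        have := hv ⟨c, by omega⟩
        rw [construct_blk2 A hblk.1 hblk.2 hdiva, construct_blk2 A hj1 hj2 hdivj] at this
        rw [dif_pos c.2, dif_pos c.2] at this
        exact this
      · exact Finset.mem_range.mpr (Nat.mod_lt _ hm)
    · intro b hb
      have hb' := Finset.mem_product.mp hb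
      have hb1 := Finset.mem_filter.mp hb'.1
      have hb2 : (b.2 : ℕ) < m := Finset.mem_range.mp hb'.2
      simp only [Finset.mem_filter, Finset.mem_univ, true_and]
      obtain ⟨l, hl, hv⟩ := hb1.2
      have hmul : m * ((b.1 : ℕ) + 1) ≤ m * n := Nat.mul_le_mul_left m (by omega)
      have hlow : n ≤ n + m * (b.1 : ℕ) + b.2 := by omega
      have hhigh : n + m * (b.1 : ℕ) + b.2 < n + n * m := by
        simp only [Nat.mul_add, Nat.mul_one] at hmul
        have hmn : m * n = n * m := Nat.mul_comm m n
        omega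
      have hidx : ((n + m * (b.1 : ℕ) + b.2) - n) / m = (b.1 : ℕ) := by
        have : n + m * (b.1 : ℕ) + b.2 - n = m * (b.1 : ℕ) + b.2 := by omega
        rw [this, Nat.mul_add_div hm, Nat.div_eq_of_lt hb2, Nat.add_zero]
      refine ⟨l, hl, ?_⟩
      funext a
      have hdiva : ((n + m * (b.1 : ℕ) + (b.2:ℕ)) - n) / m < n := by rw [hidx]; exact b.1.2
      rw [Pi.smul_apply, smul_eq_mul]
      rw [construct_blk2 A (j := ⟨n + m * (b.1 : ℕ) + b.2, _⟩) hlow hhigh hdiva,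
        construct_blk2 A hj1 hj2 hdivj]
      by_cases hc : (a : ℕ) < k
      · rw [dif_pos hc, dif_pos hc]
        have := congrFun hv ⟨a, hc⟩
        rw [Pi.smul_apply, smul_eq_mul] at this
        have h2 : (⟨((n + m * (b.1 : ℕ) + (b.2:ℕ)) - n) / m, hdiva⟩ : Fin n) = b.1 := by
          apply Fin.ext; exact hidx
        rw [h2]
        exact this
      · rw [dif_neg hc, dif_neg hc, mul_zero]
    · intro a ha
      simp only [Finset.mem_filter, Finset.mem_univ, true_and] at ha
      have hblk := (rel_same_block A hAnz hm hk ha).2.mpr ⟨hj1, hj2⟩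
      apply Fin.ext
      simp only []
      have := Nat.div_add_mod ((a : ℕ) - n) m
      omega
    · intro b hb
      have hb' := Finset.mem_product.mp hb
      have hb2 : (b.2 : ℕ) < m := Finset.mem_range.mp hb'.2
      have hsub : n + m * (b.1 : ℕ) + (b.2:ℕ) - n = m * (b.1 : ℕ) + b.2 := by omega
      refine Prod.ext ?_ ?_
      · apply Fin.ext
        simp only []
        rw [hsub, Nat.mul_add_div hm, Nat.div_eq_of_lt hb2, Nat.add_zero]
      · simp only []
        rw [hsub, Nat.mul_add_mod, Nat.mod_eq_of_lt hb2]
  rw [hcard, Finset.card_product, Finset.card_range]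
  exact dvd_mul_left m _

end AuxPCE

/-- if `S' * G' * M' = H'` with `S'` invertible and `M'` monomial, then the
permutation underlying `M'` preserves the three column blocks of the Construction
(here, 0-indexed: `[0, n)`, `[n, n + nm)` and `[n + nm, n')`). -/
theorem stmt6 (q k n m : ℕ) (hq : IsPrimePow q) (hk : 0 < k) (hn : 0 < n) (hm : 0 < m)
    (F : Type*) [Field F] [Fintype F] (hF : Fintype.card F = q)
    (G H : Matrix (Fin k) (Fin n) F)
    (hGnz : ∀ j, (fun i => G i j) ≠ 0)
    (hHnz : ∀ j, (fun i => H i j) ≠ 0)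
    (hmG : maxColCount G < m) (hmH : maxColCount H < m)
    (S' : Matrix (Fin (k + 1)) (Fin (k + 1)) F) (hS' : IsUnit S')
    (M' : Matrix (Fin (n + 2 * (n * m) + 1)) (Fin (n + 2 * (n * m) + 1)) F)
    (σ : Equiv.Perm (Fin (n + 2 * (n * m) + 1)))
    (d : Fin (n + 2 * (n * m) + 1) → F) (hd : ∀ j, d j ≠ 0)
    (hM : ∀ i j, M' i j = if i = σ j then d j else 0)
    (heq : S' * construct G m * M' = construct H m) :
    (∀ i : Fin (n + 2 * (n * m) + 1), (i : ℕ) < n → ((σ i : ℕ) < n)) ∧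
      (∀ i : Fin (n + 2 * (n * m) + 1), n ≤ (i : ℕ) → (i : ℕ) < n + n * m →
        n ≤ (σ i : ℕ) ∧ (σ i : ℕ) < n + n * m) ∧
      (∀ i : Fin (n + 2 * (n * m) + 1), n + n * m ≤ (i : ℕ) → n + n * m ≤ (σ i : ℕ)) := by
  -- m ≥ 2
  have hH1 : 1 ≤ maxColCount H := by
    have h0 : 1 ≤ colCount H (fun a => H a ⟨0, hn⟩) := by
      refine Finset.card_pos.mpr ⟨⟨0, hn⟩, Finset.mem_filter.mpr ⟨Finset.mem_univ _, rfl⟩⟩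
    exact le_trans h0 (Finset.le_sup (Finset.mem_univ _))
  have hm2 : 2 ≤ m := by omega
  have hnm : m ≤ n * m := Nat.le_mul_of_pos_left m hn
  -- column relation coming from `heq`
  have hcol : ∀ (j : Fin (n + 2 * (n * m) + 1)) (a : Fin (k + 1)),
      construct H m a j = d j * (S' * construct G m) a (σ j) := by
    intro j a
    have h1 := congrFun (congrFun heq a) j
    rw [← h1, Matrix.mul_apply]
    simp only [hM, mul_ite, mul_zero]
    rw [Finset.sum_ite_eq' Finset.univ (σ j) (fun b => (S' * construct G m) a b * d j)]
    simp [mul_comm]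
  -- injectivity of multiplication by S'
  obtain ⟨B, hB⟩ : ∃ B, B * S' = 1 :=
    ⟨((hS'.unit⁻¹ : (Matrix (Fin (k + 1)) (Fin (k + 1)) F)ˣ) : Matrix (Fin (k + 1)) (Fin (k + 1)) F), by
      nth_rewrite 2 [← hS'.unit_spec]
      exact hS'.unit.inv_mul⟩
  have hinj : ∀ u v : Fin (k + 1) → F, S'.mulVec u = S'.mulVec v → u = v := by
    intro u v huv
    have h2 := congrArg (fun w => B.mulVec w) huv
    simpa [Matrix.mulVec_mulVec, hB, Matrix.one_mulVec] using h2
  have hSG : ∀ (j : Fin (n + 2 * (n * m) + 1)) (a : Fin (k + 1)),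
      (S' * construct G m) a j = (S'.mulVec fun c => construct G m c j) a := by
    intro j a
    simp [Matrix.mul_apply, Matrix.mulVec, dotProduct]
  -- transfer of proportionality along σ
  have relIff : ∀ i j : Fin (n + 2 * (n * m) + 1),
      PropRel (fun a => construct H m a i) (fun a => construct H m a j) ↔
      PropRel (fun a => construct G m a (σ i)) (fun a => construct G m a (σ j)) := by
    intro i j
    constructor
    · rintro ⟨l, hl, hv⟩
      have h1 : S'.mulVec (d i • fun c => construct G m c (σ i)) =
          S'.mulVec ((l * d j) • fun c => construct G m c (σ j)) := by
        rw [Matrix.mulVec_smul, Matrix.mulVec_smul]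
        funext a
        simp only [Pi.smul_apply, smul_eq_mul]
        rw [← hSG (σ i) a, ← hSG (σ j) a]
        have h2 := congrFun hv a
        simp only [Pi.smul_apply, smul_eq_mul] at h2
        rw [hcol i a, hcol j a] at h2
        rw [h2, mul_assoc]
      have h3 := hinj _ _ h1
      refine ⟨(d i)⁻¹ * (l * d j),
        mul_ne_zero (inv_ne_zero (hd i)) (mul_ne_zero hl (hd j)), ?_⟩
      calc (fun a => construct G m a (σ i))
          = (d i)⁻¹ • (d i • fun a => construct G m a (σ i)) := by
            rw [smul_smul, inv_mul_cancel₀ (hd i), one_smul]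
        _ = (d i)⁻¹ • ((l * d j) • fun a => construct G m a (σ j)) := by rw [h3]
        _ = ((d i)⁻¹ * (l * d j)) • fun a => construct G m a (σ j) := smul_smul _ _ _
    · rintro ⟨l, hl, hv⟩
      refine ⟨d i * l * (d j)⁻¹,
        mul_ne_zero (mul_ne_zero (hd i) hl) (inv_ne_zero (hd j)), ?_⟩
      funext a
      rw [Pi.smul_apply, smul_eq_mul, hcol i a, hcol j a]
      have h2 : (S' * construct G m) a (σ i) = l * (S' * construct G m) a (σ j) := by
        rw [hSG, hSG, hv, Matrix.mulVec_smul]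
        simp
      rw [h2]
      field_simp
      rw [eq_div_iff (hd j)]
  -- the class sizes are transported by σ
  have hcnt : ∀ j : Fin (n + 2 * (n * m) + 1), cnt H m j = cnt G m (σ j) := by
    intro j
    unfold cnt
    refine Finset.card_bij' (fun a _ => σ a) (fun b _ => σ.symm b) ?_ ?_ ?_ ?_
    · intro a ha
      simp only [Finset.mem_filter, Finset.mem_univ, true_and] at ha ⊢
      exact (relIff a j).mp ha
    · intro b hb
      simp only [Finset.mem_filter, Finset.mem_univ, true_and] at hb ⊢
      refine (relIff _ j).mpr ?_
      rwa [σ.apply_symm_apply]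
    · intro a _; exact σ.symm_apply_apply a
    · intro b _; exact σ.apply_symm_apply b
  refine ⟨?_, ?_, ?_⟩
  · -- block 1 goes to block 1
    intro i hi
    have hs : cnt H m i ≤ maxColCount H := cnt_blk1 H hHnz hm hk hi
    by_contra hcon
    rcases lt_or_ge ((σ i : ℕ)) (n + n * m) with h2 | h2
    · have hdvd : m ∣ cnt G m (σ i) := cnt_blk2 G hGnz hm hk (by omega) h2
      have hp : 1 ≤ cnt G m (σ i) := cnt_pos G (σ i)
      have := Nat.le_of_dvd (by omega) hdvd
      have hc := hcnt i
      omega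
    · have h3 := cnt_blk3 G hGnz hm hk h2
      have hc := hcnt i
      omega
  · -- block 2 goes to block 2
    intro i h1 h2
    have hdvd : m ∣ cnt H m i := cnt_blk2 H hHnz hm hk h1 h2
    have hge : m ≤ cnt H m i := Nat.le_of_dvd (by have := cnt_pos H (m := m) i; omega) hdvd
    have hc := hcnt i
    rcases lt_or_ge ((σ i : ℕ)) n with h3 | h3
    · exfalso
      have hs : cnt G m (σ i) ≤ maxColCount G := cnt_blk1 G hGnz hm hk h3
      omega
    rcases lt_or_ge ((σ i : ℕ)) (n + n * m) with h4 | h4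
    · exact ⟨h3, h4⟩
    · exfalso
      have h5 := cnt_blk3 G hGnz hm hk h4
      have hdvd2 : m ∣ n * m + 1 := by rw [← h5, ← hc]; exact hdvd
      have hdvd3 : m ∣ n * m := dvd_mul_left m n
      have hdvd4 : m ∣ 1 := by
        have := Nat.dvd_sub hdvd2 hdvd3
        simpa using this
      have := Nat.le_of_dvd one_pos hdvd4
      omega
  · -- block 3 goes to block 3
    intro i h1
    have hs := cnt_blk3 H hHnz hm hk h1
    have hc := hcnt i
    by_contra hcon
    rcases lt_or_ge ((σ i : ℕ)) n with h3 | h3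
    · have hsG : cnt G m (σ i) ≤ maxColCount G := cnt_blk1 G hGnz hm hk h3
      omega
    · have h4 : (σ i : ℕ) < n + n * m := by omega
      have hdvd : m ∣ cnt G m (σ i) := cnt_blk2 G hGnz hm hk h3 h4
      have hdvd2 : m ∣ n * m + 1 := by rw [← hs, hc]; exact hdvd
      have hdvd3 : m ∣ n * m := dvd_mul_left m n
      have hdvd4 : m ∣ 1 := by
        have := Nat.dvd_sub hdvd2 hdvd3
        simpa using this
      have := Nat.le_of_dvd one_pos hdvd4
      omega
end

section
/- Let q be a prime power and G, H ∈ 𝔽_q^{k×n} be matrices with no zero columns such that G has full row rank k. Let m be a positive integer with m > m_G and m > m_H, and let G', H' ∈ 𝔽_q^{(k+1)×n'} be obtained from G and H by the Construction (with this m). Suppose S'·G'·M' = H' for some invertible S' ∈ GL_{k+1}(𝔽_q) and monomial matrix M' ∈ 𝔽_q^{n'×n'}. Then: (i) S'[i, k+1] = 0 for every i ∈ [1, k]; (ii) S'[k+1, j] = 0 for every j ∈ [1, k]; (iii) S'[k+1, k+1] ≠ 0. -/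
open scoped Classical

lemma fin_card_filter_lt (N c : ℕ) (h : c ≤ N) :
    (Finset.univ.filter fun j : Fin N => (j : ℕ) < c).card = c := by
  have : (Finset.univ.filter fun j : Fin N => (j : ℕ) < c) =
      (Finset.range c).attachFin (fun m hm => lt_of_lt_of_le (Finset.mem_range.mp hm) h) := by
    ext j
    simp [Finset.mem_attachFin]
  rw [this, Finset.card_attachFin, Finset.card_range]

lemma fin_card_filter_ge (N c : ℕ) (h : c ≤ N) :
    (Finset.univ.filter fun j : Fin N => c ≤ (j : ℕ)).card = N - c := by
  have key := Finset.card_filter_add_card_filter_not (s := (Finset.univ : Finset (Fin N)))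
    (p := fun j : Fin N => (j : ℕ) < c)
  rw [fin_card_filter_lt N c h] at key
  have : (Finset.univ.filter fun j : Fin N => c ≤ (j : ℕ)) =
      (Finset.univ.filter fun j : Fin N => ¬ (j : ℕ) < c) := by
    ext j; simp [not_lt]
  rw [this]
  simp only [Finset.card_univ, Fintype.card_fin] at key
  omega

lemma fin_card_filter_Ico (N a b : ℕ) (h : b ≤ N) :
    (Finset.univ.filter fun j : Fin N => a ≤ (j : ℕ) ∧ (j : ℕ) < b).card = b - a := by
  have : (Finset.univ.filter fun j : Fin N => a ≤ (j : ℕ) ∧ (j : ℕ) < b) =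
      (Finset.Ico a b).attachFin (fun m hm => lt_of_lt_of_le (Finset.mem_Ico.mp hm).2 h) := by
    ext j
    simp [Finset.mem_attachFin, Finset.mem_Ico]
  rw [this, Finset.card_attachFin, Nat.card_Ico]

lemma card_filter_perm {N : ℕ} (σ : Equiv.Perm (Fin N)) (P : Fin N → Prop)
    [DecidablePred P] [DecidablePred fun j => P (σ j)] :
    (Finset.univ.filter fun j => P (σ j)).card = (Finset.univ.filter P).card := by
  apply Finset.card_bij (fun j _ => σ j)
  · intro a ha; simp at ha ⊢; exact ha
  · intro a _ b _ hab; exact σ.injective hab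
  · intro b hb; exact ⟨σ.symm b, by simp at hb ⊢; exact hb, by simp⟩
lemma vecMul_eq_zero_of_rank {k n : ℕ} {F : Type*} [Field F] (G : Matrix (Fin k) (Fin n) F)
    (h : G.rank = k) (s : Fin k → F) (hs : Matrix.vecMul s G = 0) : s = 0 := by
  have hli : LinearIndependent F (fun i => G i) := by
    rw [linearIndependent_iff_card_eq_finrank_span]
    rw [Matrix.rank_eq_finrank_span_row] at h
    rw [Fintype.card_fin]
    exact h.symm
  have hinj := Matrix.vecMul_injective_iff.mpr hli
  have : Matrix.vecMul s G = Matrix.vecMul 0 G := by simp [hs]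
  exact hinj this

lemma card_block2 {n m N : ℕ} (hm : 0 < m) (hN : n + n*m ≤ N)
    (Q : ℕ → Prop) (Z2 : Finset (Fin N)) (A : Finset (Fin n))
    (hZ2 : ∀ l : Fin N, l ∈ Z2 ↔ n ≤ (l:ℕ) ∧ (l:ℕ) < n + n*m ∧ Q (((l:ℕ)-n)/m))
    (hA : ∀ t : Fin n, t ∈ A ↔ Q (t:ℕ)) :
    Z2.card = m * A.card := by
  rw [show m * A.card = (A ×ˢ (Finset.univ : Finset (Fin m))).card by
    rw [Finset.card_product]; simp [Nat.mul_comm]]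
  refine Finset.card_bij' (fun l hl =>
      (⟨((l:ℕ)-n)/m, by
        have hl' := (hZ2 l).mp hl
        exact (Nat.div_lt_iff_lt_mul hm).mpr (by omega)⟩,
       ⟨((l:ℕ)-n) % m, Nat.mod_lt _ hm⟩))
    (fun p hp => ⟨n + (p.1:ℕ)*m + (p.2:ℕ), by
      have h1 : (p.1:ℕ) < n := p.1.isLt
      have h2 : (p.2:ℕ) < m := p.2.isLt
      have : (p.1:ℕ)*m + (p.2:ℕ) < ((p.1:ℕ)+1)*m := by
        rw [Nat.succ_mul]; omega
      have h3 : ((p.1:ℕ)+1)*m ≤ n*m := Nat.mul_le_mul_right m h1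
      omega⟩) ?hi ?hj ?left ?right
  case hi =>
    intro l hl
    have hl' := (hZ2 l).mp hl
    simp only [Finset.mem_product, Finset.mem_univ, and_true]
    rw [hA]
    exact hl'.2.2
  case hj =>
    intro p hp
    simp only [Finset.mem_product, Finset.mem_univ, and_true] at hp
    rw [hA] at hp
    have h2 : (p.2:ℕ) < m := p.2.isLt
    have hdiv : (n + (p.1:ℕ)*m + (p.2:ℕ) - n)/m = (p.1:ℕ) := by
      have heq : n + (p.1:ℕ)*m + (p.2:ℕ) - n = (p.2:ℕ) + (p.1:ℕ)*m := by omega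
      rw [heq, Nat.add_mul_div_right _ _ hm, Nat.div_eq_of_lt h2, Nat.zero_add]
    rw [hZ2]
    simp only [Fin.val_mk]
    refine ⟨by omega, ?_, by rw [hdiv]; exact hp⟩
    have h1 : (p.1:ℕ) < n := p.1.isLt
    have : (p.1:ℕ)*m + (p.2:ℕ) < ((p.1:ℕ)+1)*m := by rw [Nat.succ_mul]; omega
    have h3 : ((p.1:ℕ)+1)*m ≤ n*m := Nat.mul_le_mul_right m h1
    omega
  case left =>
    intro l hl
    have hl' := (hZ2 l).mp hl
    apply Fin.ext
    have := Nat.div_add_mod' ((l:ℕ)-n) m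
    simp only [Fin.val_mk]
    omega
  case right =>
    intro p hp
    have h2 : (p.2:ℕ) < m := p.2.isLt
    have heq : n + (p.1:ℕ)*m + (p.2:ℕ) - n = (p.2:ℕ) + (p.1:ℕ)*m := by omega
    have hdiv : (n + (p.1:ℕ)*m + (p.2:ℕ) - n)/m = (p.1:ℕ) := by
      rw [heq, Nat.add_mul_div_right _ _ hm, Nat.div_eq_of_lt h2, Nat.zero_add]
    have hmod : (n + (p.1:ℕ)*m + (p.2:ℕ) - n) % m = (p.2:ℕ) := by
      rw [heq, Nat.add_mul_mod_self_right, Nat.mod_eq_of_lt h2]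
    ext
    · simp [hdiv]
    · simp [hmod]


section lemmas
variable {k n : ℕ} {F : Type*} [Field F] (A : Matrix (Fin k) (Fin n) F) (m : ℕ)

lemma construct_t1_top (i : Fin (k+1)) (hi : (i:ℕ) < k) (j : Fin (n+2*(n*m)+1))
    (hj : (j:ℕ) < n) : construct A m i j = A ⟨i, hi⟩ ⟨j, hj⟩ := by
  simp [construct, hj, hi]

lemma construct_t1_bot (j : Fin (n+2*(n*m)+1)) (hj : (j:ℕ) < n) :
    construct A m (Fin.last k) j = 1 := by
  simp [construct, hj]

lemma construct_t2_top (i : Fin (k+1)) (hi : (i:ℕ) < k) (j : Fin (n+2*(n*m)+1))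
    (hj1 : ¬ (j:ℕ) < n) (hj2 : (j:ℕ) < n + n*m) (h : ((j:ℕ)-n)/m < n) :
    construct A m i j = A ⟨i, hi⟩ ⟨((j:ℕ)-n)/m, h⟩ := by
  simp [construct, hj1, hj2, hi]

lemma construct_t2_bot (j : Fin (n+2*(n*m)+1)) (hj1 : ¬ (j:ℕ) < n) (hj2 : (j:ℕ) < n + n*m) :
    construct A m (Fin.last k) j = 0 := by
  simp [construct, hj1, hj2]

lemma construct_t3_top (i : Fin (k+1)) (hi : (i:ℕ) < k) (j : Fin (n+2*(n*m)+1))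
    (hj : n + n*m ≤ (j:ℕ)) : construct A m i j = 0 := by
  have h1 : ¬ (j:ℕ) < n := by omega
  have h2 : ¬ (j:ℕ) < n + n*m := by omega
  simp [construct, h1, h2, hi]

lemma construct_t3_bot (j : Fin (n+2*(n*m)+1)) (hj : n + n*m ≤ (j:ℕ)) :
    construct A m (Fin.last k) j = 1 := by
  have h1 : ¬ (j:ℕ) < n := by omega
  have h2 : ¬ (j:ℕ) < n + n*m := by omega
  simp [construct, h1, h2]

end lemmas


/-- if `S' * G' * M' = H'` with `S'` invertible and `M'` monomial, then the last
column and last row of `S'` are zero except for the last entry, which is nonzero. -/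
theorem stmt8 (q k n m : ℕ) (hq : IsPrimePow q) (hk : 0 < k) (hn : 0 < n) (hm : 0 < m)
    (F : Type*) [Field F] [Fintype F] (hF : Fintype.card F = q)
    (G H : Matrix (Fin k) (Fin n) F)
    (hGnz : ∀ j, (fun i => G i j) ≠ 0)
    (hHnz : ∀ j, (fun i => H i j) ≠ 0)
    (hGrank : G.rank = k)
    (hmG : maxColCount G < m) (hmH : maxColCount H < m)
    (S' : Matrix (Fin (k + 1)) (Fin (k + 1)) F) (hS' : IsUnit S')
    (M' : Matrix (Fin (n + 2 * (n * m) + 1)) (Fin (n + 2 * (n * m) + 1)) F)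
    (hM' : IsMonomialMatrix M')
    (heq : S' * construct G m * M' = construct H m) :
    (∀ i : Fin (k + 1), (i : ℕ) < k → S' i (Fin.last k) = 0) ∧
      (∀ j : Fin (k + 1), (j : ℕ) < k → S' (Fin.last k) j = 0) ∧
      S' (Fin.last k) (Fin.last k) ≠ 0 := by
  obtain ⟨σ, d, hd, hM⟩ := hM'
  have hNle : n + n*m ≤ n + 2*(n*m) + 1 := by omega
  -- entrywise equation
  have key : ∀ a j, construct H m a j
      = (∑ b, S' a b * construct G m b (σ j)) * d j := by
    intro a j
    have h0 : (S' * construct G m * M') a j = construct H m a j := by rw [heq]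
    rw [Matrix.mul_apply] at h0
    simp only [hM, mul_ite, mul_zero, Finset.sum_ite_eq', Finset.mem_univ, if_true] at h0
    rw [Matrix.mul_apply] at h0
    exact h0.symm
  -- sums against type-3 columns of G'
  have hsum3 : ∀ (l : Fin (n + 2*(n*m)+1)), n + n*m ≤ (l:ℕ) →
      ∀ a, (∑ b, S' a b * construct G m b l) = S' a (Fin.last k) := by
    intro l hl a
    rw [Fin.sum_univ_castSucc]
    have h1 : ∀ b : Fin k, S' a b.castSucc * construct G m b.castSucc l = 0 := by
      intro b
      rw [construct_t3_top G m b.castSucc (by simp) l hl, mul_zero]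
    simp only [h1, Finset.sum_const_zero, zero_add]
    rw [construct_t3_bot G m l hl, mul_one]
  have hT : ∀ j, n + n*m ≤ ((σ j : Fin (n + 2*(n*m)+1)) : ℕ) →
      ∀ a, construct H m a j = S' a (Fin.last k) * d j := by
    intro j hj a
    rw [key a j, hsum3 _ hj]
  set T : Finset (Fin (n + 2*(n*m)+1)) :=
    Finset.univ.filter (fun j => n + n*m ≤ ((σ j : Fin (n + 2*(n*m)+1)) : ℕ)) with hTdef
  have hTcard : T.card = n*m + 1 := by
    rw [hTdef, card_filter_perm σ (fun j : Fin (n + 2*(n*m)+1) => n + n*m ≤ (j:ℕ)), fin_card_filter_ge _ _ hNle]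
    omega
  -- part (iii)
  have hiii : S' (Fin.last k) (Fin.last k) ≠ 0 := by
    intro h0
    have hsub : T ⊆ Finset.univ.filter
        (fun j : Fin (n + 2*(n*m)+1) => n ≤ (j:ℕ) ∧ (j:ℕ) < n + n*m) := by
      intro j hj
      rw [hTdef, Finset.mem_filter] at hj
      have hz := hT j hj.2 (Fin.last k)
      rw [h0, zero_mul] at hz
      rw [Finset.mem_filter]
      refine ⟨Finset.mem_univ _, ?_⟩
      by_contra hc
      rcases (by omega : (j:ℕ) < n ∨ n + n*m ≤ (j:ℕ)) with h | h
      · rw [construct_t1_bot H m j h] at hz; exact one_ne_zero hz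
      · rw [construct_t3_bot H m j h] at hz; exact one_ne_zero hz
    have := Finset.card_le_card hsub
    rw [hTcard, fin_card_filter_Ico _ n (n + n*m) hNle] at this
    omega
  -- part (i)
  have hpi : ∀ i : Fin (k + 1), (i : ℕ) < k → S' i (Fin.last k) = 0 := by
    intro i hik
    by_contra hv
    have hsub : T ⊆ Finset.univ.filter
        (fun j : Fin (n + 2*(n*m)+1) => (j:ℕ) < n) := by
      intro j hj
      rw [hTdef, Finset.mem_filter] at hj
      have h1 := hT j hj.2 i
      have h2 := hT j hj.2 (Fin.last k)
      rw [Finset.mem_filter]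
      refine ⟨Finset.mem_univ _, ?_⟩
      by_contra hc
      rcases (by omega : ((j:ℕ) < n + n*m) ∨ n + n*m ≤ (j:ℕ)) with h | h
      · rw [construct_t2_bot H m j hc h] at h2
        exact (mul_ne_zero hiii (hd j)) h2.symm
      · rw [construct_t3_top H m i hik j h] at h1
        exact (mul_ne_zero hv (hd j)) h1.symm
    have hle := Finset.card_le_card hsub
    rw [hTcard, fin_card_filter_lt _ n (by omega)] at hle
    have : n ≤ n * m := Nat.le_mul_of_pos_right n hm
    omega
  refine ⟨hpi, ?_, hiii⟩
  -- σ preserves the type-3 block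
  have hTsub : T ⊆ Finset.univ.filter
      (fun j : Fin (n + 2*(n*m)+1) => n + n*m ≤ (j:ℕ)) := by
    intro j hj
    rw [hTdef, Finset.mem_filter] at hj
    rw [Finset.mem_filter]
    refine ⟨Finset.mem_univ _, ?_⟩
    by_contra hc
    rcases (by omega : (j:ℕ) < n ∨ (n ≤ (j:ℕ) ∧ (j:ℕ) < n + n*m)) with h | h
    · -- type-1 column of H' : nonzero top entry, contradiction
      obtain ⟨i₀, hi₀⟩ := Function.ne_iff.mp (hHnz ⟨(j:ℕ), h⟩)
      have hi₀' : (i₀ : ℕ) < k := i₀.isLt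
      set i₁ : Fin (k+1) := ⟨(i₀:ℕ), by omega⟩ with hi₁def
      have h1 := hT j hj.2 i₁
      rw [construct_t1_top H m i₁ hi₀' j h] at h1
      rw [hpi i₁ hi₀', zero_mul] at h1
      apply hi₀
      simpa using h1
    · have h2 := hT j hj.2 (Fin.last k)
      rw [construct_t2_bot H m j (by omega) h.2] at h2
      exact (mul_ne_zero hiii (hd j)) h2.symm
  have hTeq : T = Finset.univ.filter
      (fun j : Fin (n + 2*(n*m)+1) => n + n*m ≤ (j:ℕ)) := by
    apply Finset.eq_of_subset_of_card_le hTsub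
    rw [hTcard, fin_card_filter_ge _ _ hNle]
    omega
  have hiff : ∀ j : Fin (n + 2*(n*m)+1),
      n + n*m ≤ ((σ j : Fin (n + 2*(n*m)+1)) : ℕ) ↔ n + n*m ≤ (j:ℕ) := by
    intro j
    constructor
    · intro h
      have : j ∈ T := by rw [hTdef, Finset.mem_filter]; exact ⟨Finset.mem_univ _, h⟩
      rw [hTeq, Finset.mem_filter] at this
      exact this.2
    · intro h
      have : j ∈ Finset.univ.filter
          (fun j : Fin (n + 2*(n*m)+1) => n + n*m ≤ (j:ℕ)) := by
        rw [Finset.mem_filter]; exact ⟨Finset.mem_univ _, h⟩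
      rw [← hTeq, hTdef, Finset.mem_filter] at this
      exact this.2
  -- part (ii)
  set s : Fin k → F := fun b => S' (Fin.last k) b.castSucc with hsdef
  have hm2 : 2 ≤ m := by
    have h1 : 1 ≤ maxColCount G := by
      have hmem : (⟨0, hn⟩ : Fin n) ∈ Finset.univ.filter
          (fun j : Fin n => (fun i => G i j) = fun i => G i ⟨0, hn⟩) := by simp
      calc 1 ≤ colCount G (fun i => G i ⟨0, hn⟩) :=
            Finset.card_pos.mpr ⟨_, hmem⟩
        _ ≤ maxColCount G := Finset.le_sup (Finset.mem_univ _)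
    omega
  -- sum decompositions for type-1 and type-2 columns
  have hsum1 : ∀ (l : Fin (n + 2*(n*m)+1)) (hl : (l:ℕ) < n),
      (∑ b, S' (Fin.last k) b * construct G m b l)
        = (∑ b : Fin k, s b * G b ⟨(l:ℕ), hl⟩) + S' (Fin.last k) (Fin.last k) := by
    intro l hl
    rw [Fin.sum_univ_castSucc]
    rw [construct_t1_bot G m l hl, mul_one]
    congr 1
    apply Finset.sum_congr rfl
    intro b _
    rw [construct_t1_top G m b.castSucc (by simp) l hl]
    simp [hsdef]
  have hsum2 : ∀ (l : Fin (n + 2*(n*m)+1)) (hl1 : ¬ (l:ℕ) < n) (hl2 : (l:ℕ) < n + n*m)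
      (h : ((l:ℕ)-n)/m < n),
      (∑ b, S' (Fin.last k) b * construct G m b l)
        = (∑ b : Fin k, s b * G b ⟨((l:ℕ)-n)/m, h⟩) := by
    intro l hl1 hl2 h
    rw [Fin.sum_univ_castSucc]
    rw [construct_t2_bot G m l hl1 hl2, mul_zero, add_zero]
    apply Finset.sum_congr rfl
    intro b _
    rw [construct_t2_top G m b.castSucc (by simp) l hl1 hl2 h]
    simp [hsdef]
  set Q : ℕ → Prop := fun t => ∃ h : t < n, (∑ b : Fin k, s b * G b ⟨t, h⟩) = 0 with hQdef
  set Z : Finset (Fin (n + 2*(n*m)+1)) := Finset.univ.filter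
    (fun l => (l:ℕ) < n + n*m ∧ (∑ b, S' (Fin.last k) b * construct G m b l) = 0) with hZdef
  -- nm ≤ |Z|
  have hZge : n*m ≤ Z.card := by
    have hinj : (Finset.univ.filter
        (fun j : Fin (n + 2*(n*m)+1) => n ≤ (j:ℕ) ∧ (j:ℕ) < n + n*m)).card ≤ Z.card := by
      apply Finset.card_le_card_of_injOn (fun j : Fin (n + 2*(n*m)+1) => σ j)
      · intro j hj
        rw [Finset.mem_coe, Finset.mem_filter] at hj
        obtain ⟨-, hj1, hj2⟩ := hj
        rw [Finset.mem_coe, hZdef, Finset.mem_filter]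
        refine ⟨Finset.mem_univ _, ?_, ?_⟩
        · have := (hiff j).not
          simp only [not_le] at this
          exact this.mpr hj2
        · have hk0 := key (Fin.last k) j
          rw [construct_t2_bot H m j (by omega) hj2] at hk0
          rcases mul_eq_zero.mp hk0.symm with h | h
          · exact h
          · exact absurd h (hd j)
      · exact Function.Injective.injOn σ.injective
    rw [fin_card_filter_Ico _ n (n + n*m) hNle] at hinj
    omega
  -- |Z| = |Z1| + |Z2|
  have hsplit := Finset.card_filter_add_card_filter_not
    (s := Z) (p := fun l : Fin (n + 2*(n*m)+1) => (l:ℕ) < n)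
  set A0 : Finset (Fin n) := Finset.univ.filter
    (fun t : Fin n => (∑ b : Fin k, s b * G b t) = 0) with hA0def
  set B0 : Finset (Fin n) := Finset.univ.filter
    (fun t : Fin n => (∑ b : Fin k, s b * G b t) = - S' (Fin.last k) (Fin.last k)) with hB0def
  have hZ1 : (Z.filter (fun l : Fin (n + 2*(n*m)+1) => (l:ℕ) < n)).card ≤ B0.card := by
    apply Finset.card_le_card_of_injOn (fun l : Fin (n + 2*(n*m)+1) =>
      if h : (l:ℕ) < n then (⟨(l:ℕ), h⟩ : Fin n) else ⟨0, hn⟩)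
    · intro l hl
      rw [Finset.mem_coe, Finset.mem_filter, hZdef, Finset.mem_filter] at hl
      obtain ⟨⟨-, -, hz⟩, hln⟩ := hl
      rw [hsum1 l hln] at hz
      rw [Finset.mem_coe, hB0def, Finset.mem_filter]
      refine ⟨Finset.mem_univ _, ?_⟩
      simp only [dif_pos hln]
      linear_combination hz
    · intro a ha b hb hab
      simp only [Finset.coe_filter, Set.mem_setOf_eq] at ha hb
      simp only [dif_pos ha.2, dif_pos hb.2, Fin.mk.injEq] at hab
      exact Fin.ext hab
  have hZ2 : (Z.filter (fun l : Fin (n + 2*(n*m)+1) => ¬ (l:ℕ) < n)).card = m * A0.card := by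
    have hmemZ2 : ∀ l : Fin (n + 2*(n*m)+1),
        l ∈ Z.filter (fun l : Fin (n + 2*(n*m)+1) => ¬ (l:ℕ) < n)
          ↔ n ≤ (l:ℕ) ∧ (l:ℕ) < n + n*m ∧ Q (((l:ℕ)-n)/m) := by
      intro l
      rw [Finset.mem_filter, hZdef, Finset.mem_filter]
      simp only [hQdef]
      constructor
      · rintro ⟨⟨-, hl2, hz⟩, hl1⟩
        have hdl : ((l:ℕ)-n)/m < n := (Nat.div_lt_iff_lt_mul hm).mpr (by omega)
        refine ⟨by omega, hl2, hdl, ?_⟩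
        rw [← hsum2 l hl1 hl2 hdl]
        exact hz
      · rintro ⟨hl1, hl2, hdl, hz⟩
        refine ⟨⟨Finset.mem_univ _, hl2, ?_⟩, by omega⟩
        rw [hsum2 l (by omega) hl2 hdl]
        exact hz
    have hmemA : ∀ t : Fin n, t ∈ A0 ↔ Q (t:ℕ) := by
      intro t
      rw [hA0def, Finset.mem_filter]
      simp only [hQdef]
      constructor
      · rintro ⟨-, hz⟩
        exact ⟨t.isLt, hz⟩
      · rintro ⟨h, hz⟩
        exact ⟨Finset.mem_univ _, hz⟩
    exact card_block2 hm hNle Q _ _ hmemZ2 hmemA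
  -- disjointness and final counting
  have hdisj : A0.card + B0.card ≤ n := by
    have hd0 : Disjoint A0 B0 := by
      rw [Finset.disjoint_left]
      intro t ht ht'
      rw [hA0def, Finset.mem_filter] at ht
      rw [hB0def, Finset.mem_filter] at ht'
      have h0 : (0:F) = - S' (Fin.last k) (Fin.last k) := by rw [← ht.2, ht'.2]
      exact hiii (neg_eq_zero.mp h0.symm)
    calc A0.card + B0.card = (A0 ∪ B0).card := (Finset.card_union_of_disjoint hd0).symm
      _ ≤ (Finset.univ : Finset (Fin n)).card := Finset.card_le_card (Finset.subset_univ _)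
      _ = n := by simp
  -- final counting argument
  have hAcard : A0.card = n := by
    have hZle : Z.card ≤ B0.card + m * A0.card := by
      rw [← hsplit, hZ2]
      exact Nat.add_le_add_right hZ1 _
    have h2 : n * m ≤ B0.card + m * A0.card := le_trans hZge hZle
    have han : A0.card ≤ n := le_trans (Nat.le_add_right _ _) hdisj
    set a := A0.card
    set b := B0.card
    set c := n - a with hcdef
    have hac : a + c = n := by omega
    have hmn : n * m = a * m + c * m := by rw [← Nat.add_mul, hac]
    have h2' : a * m + c * m ≤ b + a * m := by
      rw [← hmn]
      calc n * m ≤ B0.card + m * A0.card := h2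
        _ = b + a * m := by rw [Nat.mul_comm]
    have h3 : c * m ≤ b := by omega
    have hb : b ≤ c := by omega
    have h4 : c * 2 ≤ c * m := Nat.mul_le_mul_left c hm2
    have h5 : c * 2 ≤ c := le_trans h4 (le_trans h3 hb)
    omega
  have hA0univ : A0 = Finset.univ := Finset.eq_univ_of_card A0 (by rw [hAcard]; simp)
  have hall : ∀ t : Fin n, (∑ b : Fin k, s b * G b t) = 0 := by
    intro t
    have ht : t ∈ A0 := hA0univ ▸ Finset.mem_univ t
    rw [hA0def, Finset.mem_filter] at ht
    exact ht.2
  have hs0 : s = 0 := by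
    apply vecMul_eq_zero_of_rank G hGrank
    funext t
    simpa [Matrix.vecMul, dotProduct] using hall t
  intro j hj
  have hcs : (⟨(j:ℕ), hj⟩ : Fin k).castSucc = j := by
    apply Fin.ext
    simp
  have := congrFun hs0 ⟨(j:ℕ), hj⟩
  rw [hsdef] at this
  simpa [hcs] using this
end

section
/- Let q be a prime power and G, H ∈ 𝔽_q^{k×n} be matrices with no zero columns such that G has full row rank k. Let m be a positive integer with m > m_G and m > m_H, and let G', H' ∈ 𝔽_q^{(k+1)×n'} be obtained from G and H by the Construction (with this m). Suppose S'·G'·M' = H' for some invertible S' ∈ GL_{k+1}(𝔽_q) and monomial matrix M' ∈ 𝔽_q^{n'×n'}, and let M_1 ∈ 𝔽_q^{n×n} denote the top-left n×n block of M' (which is monomial). Then there exist a nonzero scalar a ∈ 𝔽_q^* and a permutation matrix P ∈ 𝔽_q^{n×n} such that M_1 = a·P. -/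
open scoped Classical

section AuxLemmas

open Finset

lemma card_filter_Ico (N a b : ℕ) (hb : b ≤ N) :
    (Finset.univ.filter fun j : Fin N => a ≤ (j:ℕ) ∧ (j:ℕ) < b).card = b - a := by
  rw [← Nat.card_Ico a b]
  refine Finset.card_bij (fun j _ => (j : ℕ)) ?_ ?_ ?_
  · intro x hx; simp only [Finset.mem_filter] at hx; simp [Finset.mem_Ico]; omega
  · intro x hx y hy h; exact Fin.ext h
  · intro x hx
    simp only [Finset.mem_Ico] at hx
    exact ⟨⟨x, by omega⟩, by simp; omega, rfl⟩

set_option linter.unusedSectionVars false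

variable {k n m : ℕ} {F : Type*} [Field F] [Fintype F]

/-- the special vector `e_{k+1}` -/
def eVec (k : ℕ) (F : Type*) [Field F] : Fin (k+1) → F := fun i => if (i:ℕ) < k then 0 else 1

lemma construct_col1 (A : Matrix (Fin k) (Fin n) F) (i : Fin (k+1))
    (j : Fin (n + 2*(n*m)+1)) (hj : (j:ℕ) < n) :
    construct A m i j = if hi : (i:ℕ) < k then A ⟨i, hi⟩ ⟨j, hj⟩ else 1 := by
  simp only [construct, dif_pos hj]

lemma construct_col2 (A : Matrix (Fin k) (Fin n) F) (i : Fin (k+1))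
    (j : Fin (n + 2*(n*m)+1)) (hj1 : n ≤ (j:ℕ)) (hj2 : (j:ℕ) < n + n*m)
    (t : Fin n) (ht : (t:ℕ) = ((j:ℕ) - n)/m) :
    construct A m i j = if hi : (i:ℕ) < k then A ⟨i, hi⟩ t else 0 := by
  simp only [construct, dif_neg (Nat.not_lt.mpr hj1), dif_pos hj2]
  by_cases hi : (i:ℕ) < k
  · rw [dif_pos hi, dif_pos hi]; congr 1; exact Fin.ext ht.symm
  · rw [dif_neg hi, dif_neg hi]

lemma construct_col3 (A : Matrix (Fin k) (Fin n) F) (i : Fin (k+1))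
    (j : Fin (n + 2*(n*m)+1)) (hj : n + n*m ≤ (j:ℕ)) :
    construct A m i j = if (i:ℕ) < k then 0 else 1 := by
  have h1 : ¬ (j:ℕ) < n := by omega
  have h2 : ¬ (j:ℕ) < n + n*m := by omega
  simp only [construct, dif_neg h1, dif_neg h2]

end AuxLemmas

section AuxCount

open Finset

set_option linter.unusedSectionVars false

variable {k n m : ℕ} {F : Type*} [Field F] [Fintype F]

lemma aux_line_e (hn : 0 < n) (hm : 0 < m) (A : Matrix (Fin k) (Fin n) F)
    (hA : ∀ j, (fun i => A i j) ≠ 0) (j : Fin (n + 2*(n*m)+1)) :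
    (∃ μ : F, (fun i => construct A m i j) = μ • eVec k F) ↔ n + n*m ≤ (j:ℕ) := by
  constructor
  · rintro ⟨μ, hμ⟩
    by_contra hj
    push_neg at hj
    by_cases h1 : (j:ℕ) < n
    · have hK := congrFun hμ ⟨k, k.lt_succ_self⟩
      rw [construct_col1 A _ j h1] at hK
      simp [eVec] at hK
      have hz : (fun i => A i ⟨j, h1⟩) = 0 := by
        funext i
        have hi := congrFun hμ ⟨i, by omega⟩
        rw [construct_col1 A _ j h1] at hi
        simp [eVec, i.isLt] at hi
        simpa using hi
      exact hA ⟨j, h1⟩ hz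
    · have htlt : ((j:ℕ)-n)/m < n := (Nat.div_lt_iff_lt_mul hm).mpr (by omega)
      set t : Fin n := ⟨((j:ℕ)-n)/m, htlt⟩ with ht
      have hK := congrFun hμ ⟨k, k.lt_succ_self⟩
      rw [construct_col2 A _ j (by omega) (by omega) t rfl] at hK
      simp [eVec] at hK
      have hμ0 : μ = 0 := by simpa using hK.symm
      have hz : (fun i => A i t) = 0 := by
        funext i
        have hi := congrFun hμ ⟨i, by omega⟩
        rw [construct_col2 A _ j (by omega) (by omega) t rfl] at hi
        simp [eVec, i.isLt, hμ0] at hi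
        simpa using hi
      exact hA t hz
  · intro hj
    refine ⟨1, funext fun i => ?_⟩
    rw [construct_col3 A i j hj]
    simp [eVec]

lemma aux_count_e (hn : 0 < n) (hm : 0 < m) (A : Matrix (Fin k) (Fin n) F)
    (hA : ∀ j, (fun i => A i j) ≠ 0) (v : Fin (k+1) → F)
    (hv : n*m+1 ≤ (Finset.univ.filter fun l : Fin (n+2*(n*m)+1) =>
      ∃ μ : F, (fun i => construct A m i l) = μ • v).card) :
    ∃ c : F, c ≠ 0 ∧ v = c • eVec k F := by
  have hnm : n ≤ n*m := Nat.le_mul_of_pos_right n hm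
  by_cases hvK : v ⟨k, k.lt_succ_self⟩ = 0
  · exfalso
    have hsub : (Finset.univ.filter fun l : Fin (n+2*(n*m)+1) =>
        ∃ μ : F, (fun i => construct A m i l) = μ • v) ⊆
        Finset.univ.filter (fun l => n ≤ (l:ℕ) ∧ (l:ℕ) < n + n*m) := by
      intro l hl
      simp only [mem_filter, mem_univ, true_and] at hl ⊢
      obtain ⟨μ, hμ⟩ := hl
      constructor
      · by_contra h1
        push_neg at h1
        have hK := congrFun hμ ⟨k, k.lt_succ_self⟩
        rw [construct_col1 A _ l h1] at hK
        simp [hvK] at hK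
      · by_contra h2
        push_neg at h2
        have hK := congrFun hμ ⟨k, k.lt_succ_self⟩
        rw [construct_col3 A _ l h2] at hK
        simp [hvK] at hK
    have hle := Finset.card_le_card hsub
    rw [card_filter_Ico _ _ _ (by omega)] at hle
    omega
  · by_cases htop : ∀ i : Fin (k+1), (i:ℕ) < k → v i = 0
    · refine ⟨v ⟨k, k.lt_succ_self⟩, hvK, funext fun i => ?_⟩
      by_cases hi : (i:ℕ) < k
      · rw [htop i hi]; simp [eVec, hi]
      · have hik : (i:ℕ) = k := by omega
        have hik2 : i = ⟨k, k.lt_succ_self⟩ := Fin.ext (by rw [hik])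
        rw [hik2]; simp [eVec]
    · exfalso
      push_neg at htop
      obtain ⟨i0, hi0k, hvi0⟩ := htop
      have hsub : (Finset.univ.filter fun l : Fin (n+2*(n*m)+1) =>
          ∃ μ : F, (fun i => construct A m i l) = μ • v) ⊆
          Finset.univ.filter (fun l => 0 ≤ (l:ℕ) ∧ (l:ℕ) < n) := by
        intro l hl
        simp only [mem_filter, mem_univ, true_and] at hl ⊢
        obtain ⟨μ, hμ⟩ := hl
        refine ⟨Nat.zero_le _, ?_⟩
        by_contra h1
        push_neg at h1
        by_cases h2 : (l:ℕ) < n + n*m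
        · have htlt : ((l:ℕ)-n)/m < n := (Nat.div_lt_iff_lt_mul hm).mpr (by omega)
          set t : Fin n := ⟨((l:ℕ)-n)/m, htlt⟩ with ht
          have hK := congrFun hμ ⟨k, k.lt_succ_self⟩
          rw [construct_col2 A _ l h1 h2 t rfl] at hK
          simp [eVec] at hK
          have hμ0 : μ = 0 := hK.resolve_right hvK
          apply hA t
          funext i
          have hi := congrFun hμ ⟨i, by omega⟩
          rw [construct_col2 A _ l h1 h2 t rfl] at hi
          simp [i.isLt, hμ0] at hi
          simpa using hi
        · have h3 := congrFun hμ i0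
          rw [construct_col3 A _ l (by omega), if_pos hi0k] at h3
          simp at h3
          have hμ0 : μ = 0 := h3.resolve_right hvi0
          have hK := congrFun hμ ⟨k, k.lt_succ_self⟩
          rw [construct_col3 A _ l (by omega)] at hK
          simp [hμ0] at hK
      have hle := Finset.card_le_card hsub
      rw [card_filter_Ico _ _ _ (by omega)] at hle
      omega

lemma aux_count_w (hn : 0 < n) (hm : 0 < m) (A : Matrix (Fin k) (Fin n) F)
    (hA : ∀ j, (fun i => A i j) ≠ 0) (hmA : maxColCount A < m) (w : Fin (k+1) → F)
    (hwK : w ⟨k, k.lt_succ_self⟩ ≠ 0) (i0 : Fin (k+1)) (hi0 : (i0:ℕ) < k) (hwi0 : w i0 ≠ 0) :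
    (Finset.univ.filter fun j : Fin (n+2*(n*m)+1) =>
      ∃ μ : F, μ ≠ 0 ∧ (fun i => construct A m i j) = μ • w).card < m := by
  set w' : Fin k → F := fun i => (w ⟨k, k.lt_succ_self⟩)⁻¹ * w ⟨i, by omega⟩ with hw'
  have key : ∀ j : Fin (n+2*(n*m)+1),
      (∃ μ : F, μ ≠ 0 ∧ (fun i => construct A m i j) = μ • w) →
      ∃ h : (j:ℕ) < n, (fun i => A i ⟨j, h⟩) = w' := by
    rintro j ⟨μ, hμ0, hμ⟩
    have h1 : (j:ℕ) < n := by
      by_contra h1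
      push_neg at h1
      by_cases h2 : (j:ℕ) < n + n*m
      · have htlt : ((j:ℕ)-n)/m < n := (Nat.div_lt_iff_lt_mul hm).mpr (by omega)
        have hK := congrFun hμ ⟨k, k.lt_succ_self⟩
        rw [construct_col2 A _ j h1 h2 ⟨((j:ℕ)-n)/m, htlt⟩ rfl] at hK
        simp at hK
        exact hμ0 (hK.resolve_right hwK)
      · have h3 := congrFun hμ i0
        rw [construct_col3 A _ j (by omega), if_pos hi0] at h3
        simp at h3
        exact hμ0 (h3.resolve_right hwi0)
    have hK := congrFun hμ ⟨k, k.lt_succ_self⟩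
    rw [construct_col1 A _ j h1] at hK
    simp at hK
    -- hK : 1 = μ * w K
    have hμval : μ = (w ⟨k, k.lt_succ_self⟩)⁻¹ := by
      have h : μ * w ⟨k, k.lt_succ_self⟩ = 1 := hK.symm
      rw [mul_comm] at h
      exact eq_inv_of_mul_eq_one_right h
    refine ⟨h1, funext fun i => ?_⟩
    have hi := congrFun hμ ⟨i, by omega⟩
    rw [construct_col1 A _ j h1] at hi
    simp [i.isLt] at hi
    rw [hw']
    exact hi.trans (by rw [hμval])
  have hle : (Finset.univ.filter fun j : Fin (n+2*(n*m)+1) =>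
      ∃ μ : F, μ ≠ 0 ∧ (fun i => construct A m i j) = μ • w).card ≤
      (Finset.univ.filter fun j : Fin n => (fun i => A i j) = w').card := by
    refine Finset.card_le_card_of_injOn
      (fun j : Fin (n+2*(n*m)+1) => if h : (j:ℕ) < n then (⟨(j:ℕ), h⟩ : Fin n) else ⟨0, hn⟩) ?_ ?_
    · intro j hj
      simp only [Finset.mem_coe, mem_filter, mem_univ, true_and] at hj
      obtain ⟨h1, hcol⟩ := key j hj
      simp only [Finset.mem_coe, dif_pos h1, mem_filter, mem_univ, true_and]
      exact hcol
    · intro x hx y hy hxy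
      simp only [Finset.mem_coe, mem_filter, mem_univ, true_and] at hx hy
      obtain ⟨hx1, _⟩ := key x hx
      obtain ⟨hy1, _⟩ := key y hy
      simp only [dif_pos hx1, dif_pos hy1] at hxy
      exact Fin.ext (by simpa using congrArg Fin.val hxy)
  calc _ ≤ (Finset.univ.filter fun j : Fin n => (fun i => A i j) = w').card := hle
    _ = colCount A w' := rfl
    _ ≤ maxColCount A := Finset.le_sup (Finset.mem_univ _)
    _ < m := hmA

end AuxCount

/-- if `S' * G' * M' = H'` with `S'` invertible and `M'` monomial, then the
top-left `n × n` block of `M'` equals `a • P` for some nonzero scalar `a` and permutation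
matrix `P`. -/
theorem stmt9 (q k n m : ℕ) (hq : IsPrimePow q) (hk : 0 < k) (hn : 0 < n) (hm : 0 < m)
    (F : Type*) [Field F] [Fintype F] (hF : Fintype.card F = q)
    (G H : Matrix (Fin k) (Fin n) F)
    (hGnz : ∀ j, (fun i => G i j) ≠ 0)
    (hHnz : ∀ j, (fun i => H i j) ≠ 0)
    (hGrank : G.rank = k)
    (hmG : maxColCount G < m) (hmH : maxColCount H < m)
    (S' : Matrix (Fin (k + 1)) (Fin (k + 1)) F) (hS' : IsUnit S')
    (M' : Matrix (Fin (n + 2 * (n * m) + 1)) (Fin (n + 2 * (n * m) + 1)) F)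
    (hM' : IsMonomialMatrix M')
    (heq : S' * construct G m * M' = construct H m) :
    ∃ a : F, a ≠ 0 ∧ ∃ P : Matrix (Fin n) (Fin n) F, IsPermMatrix P ∧
      M'.submatrix (Fin.castLE (by omega)) (Fin.castLE (by omega)) = a • P := by
  obtain ⟨σ, d, hd0, hMd⟩ := hM'
  have hnle : n ≤ n + 2 * (n * m) + 1 := by omega
  -- the key column equation
  have hcol : ∀ j : Fin (n + 2*(n*m) + 1), (fun i => construct H m i j) =
      d j • S'.mulVec (fun i' => construct G m i' (σ j)) := by
    intro j
    funext i
    have h0 := congrFun (congrFun heq i) j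
    rw [Matrix.mul_apply] at h0
    simp only [hMd, mul_ite, mul_zero] at h0
    rw [Finset.sum_ite_eq' Finset.univ (σ j)
      (fun l => (S' * construct G m) i l * d j)] at h0
    simp only [Finset.mem_univ, if_true] at h0
    rw [← h0]
    simp [Matrix.mul_apply, Matrix.mulVec, dotProduct, mul_comm]
  -- inverses
  have hdet : IsUnit S'.det := (Matrix.isUnit_iff_isUnit_det S').mp hS'
  have hTS : S'⁻¹ * S' = 1 := Matrix.nonsing_inv_mul S' hdet
  have hST : S' * S'⁻¹ = 1 := Matrix.mul_nonsing_inv S' hdet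
  have hback : ∀ x : Fin (k+1) → F, S'⁻¹.mulVec (S'.mulVec x) = x := fun x => by
    rw [Matrix.mulVec_mulVec, hTS, Matrix.one_mulVec]
  have hfwd : ∀ x : Fin (k+1) → F, S'.mulVec (S'⁻¹.mulVec x) = x := fun x => by
    rw [Matrix.mulVec_mulVec, hST, Matrix.one_mulVec]
  -- the e-line of G' corresponds to the e-line of H'
  have hcount0 : n*m+1 ≤ (Finset.univ.filter fun l : Fin (n+2*(n*m)+1) =>
      ∃ μ : F, (fun i => construct G m i l) = μ • (S'⁻¹.mulVec (eVec k F))).card := by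
    have hcard3 : (Finset.univ.filter fun j : Fin (n+2*(n*m)+1) =>
        n + n*m ≤ (j:ℕ)).card = n*m+1 := by
      have hre : (Finset.univ.filter fun j : Fin (n+2*(n*m)+1) => n + n*m ≤ (j:ℕ)) =
          Finset.univ.filter (fun j : Fin (n+2*(n*m)+1) => n + n*m ≤ (j:ℕ) ∧ (j:ℕ) < n+2*(n*m)+1) := by
        apply Finset.filter_congr; intro j _; simp [j.isLt]
      rw [hre, card_filter_Ico _ _ _ (le_refl _)]
      omega
    rw [← hcard3]
    apply Finset.card_le_card_of_injOn σ
    · intro j hj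
      simp only [Finset.mem_coe, Finset.mem_filter, Finset.mem_univ, true_and] at hj ⊢
      obtain ⟨μ, hμ⟩ := (aux_line_e hn hm H hHnz j).mpr hj
      refine ⟨(d j)⁻¹ * μ, ?_⟩
      rw [hcol j] at hμ
      have h2 : S'.mulVec (fun i' => construct G m i' (σ j)) = (d j)⁻¹ • (μ • eVec k F) := by
        rw [← hμ, smul_smul, inv_mul_cancel₀ (hd0 j), one_smul]
      have h3 := congrArg (S'⁻¹.mulVec) h2
      rw [hback] at h3
      rw [h3, Matrix.mulVec_smul, Matrix.mulVec_smul, smul_smul]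
    · intro x _ y _ h
      exact σ.injective h
  obtain ⟨c, hc0, hce⟩ := aux_count_e hn hm G hGnz _ hcount0
  have hSe : S'.mulVec (eVec k F) = c⁻¹ • eVec k F := by
    have h1 := congrArg (S'.mulVec) hce
    rw [hfwd, Matrix.mulVec_smul] at h1
    calc S'.mulVec (eVec k F) = c⁻¹ • (c • S'.mulVec (eVec k F)) := by
          rw [smul_smul, inv_mul_cancel₀ hc0, one_smul]
      _ = c⁻¹ • eVec k F := by rw [← h1]
  -- key: S' maps embedded columns of G into the hyperplane (last coord 0)
  have hC3 : ∀ t : Fin n,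
      (S'.mulVec (fun i => if hi : (i:ℕ) < k then G ⟨i,hi⟩ t else 0)) ⟨k, k.lt_succ_self⟩ = 0 := by
    intro t
    by_contra hwK
    set v : Fin (k+1) → F := (fun i => if hi : (i:ℕ) < k then G ⟨i,hi⟩ t else 0) with hv
    set w : Fin (k+1) → F := S'.mulVec v with hw
    have hmul : (t:ℕ)*m + m ≤ n*m := by
      have h := Nat.mul_le_mul_right m (Nat.succ_le_of_lt t.isLt)
      rwa [Nat.succ_mul] at h
    have hlow : m ≤ (Finset.univ.filter fun j : Fin (n+2*(n*m)+1) =>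
        ∃ μ : F, μ ≠ 0 ∧ (fun i => construct H m i j) = μ • w).card := by
      have hcardm : (Finset.univ.filter (fun l : Fin (n+2*(n*m)+1) =>
          n + (t:ℕ)*m ≤ (l:ℕ) ∧ (l:ℕ) < n + (t:ℕ)*m + m)).card = m := by
        rw [card_filter_Ico _ _ _ (by omega)]
        omega
      refine le_trans (le_of_eq hcardm.symm) (Finset.card_le_card_of_injOn σ.symm ?_ ?_)
      · intro l hl
        simp only [Finset.mem_coe, Finset.mem_filter, Finset.mem_univ, true_and] at hl ⊢
        obtain ⟨hl1, hl2⟩ := hl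
        have hdiv : ((t:ℕ)) = ((l:ℕ) - n)/m := by
          symm
          apply Nat.div_eq_of_lt_le <;> [skip; rw [add_mul]] <;> omega
        have hgl : (fun i => construct G m i l) = v := by
          funext i
          rw [construct_col2 G i l (by omega) (by omega) t hdiv, hv]
        refine ⟨d (σ.symm l), hd0 _, ?_⟩
        have h1 := hcol (σ.symm l)
        rw [Equiv.apply_symm_apply, hgl] at h1
        rw [h1, hw]
      · intro x _ y _ h
        exact σ.symm.injective h
    by_cases htop : ∃ i0 : Fin (k+1), (i0:ℕ) < k ∧ w i0 ≠ 0
    · obtain ⟨i0, hi0, hwi0⟩ := htop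
      have := aux_count_w hn hm H hHnz hmH w hwK i0 hi0 hwi0
      omega
    · push_neg at htop
      have hwe : w = w ⟨k, k.lt_succ_self⟩ • eVec k F := by
        funext i
        by_cases hi : (i:ℕ) < k
        · rw [htop i hi]; simp [eVec, hi]
        · have hik : (i:ℕ) = k := by omega
          have hik2 : i = ⟨k, k.lt_succ_self⟩ := Fin.ext (by rw [hik])
          rw [hik2]; simp [eVec]
      have hv0' : v = (w ⟨k, k.lt_succ_self⟩ * c) • eVec k F := by
        have h1 : v = S'⁻¹.mulVec w := (hback v).symm
        rw [hwe, Matrix.mulVec_smul] at h1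
        rw [h1, hce, smul_smul]
      have hvKz : v ⟨k, k.lt_succ_self⟩ = 0 := by rw [hv]; simp
      have h2 := congrFun hv0' ⟨k, k.lt_succ_self⟩
      rw [hvKz] at h2
      simp [eVec] at h2
      rcases h2 with h | h
      · exact hwK h
      · exact hc0 h
  -- block classification of sigma on the first n columns
  have hblk : ∀ j : Fin (n + 2*(n*m) + 1), (j:ℕ) < n → ((σ j : ℕ) < n ∧ d j = c) := by
    intro j hj
    have h1 := hcol j
    have hσn : (σ j : ℕ) < n := by
      by_contra hns
      push_neg at hns
      by_cases h2 : (σ j : ℕ) < n + n*m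
      · set t : Fin n := ⟨((σ j:ℕ)-n)/m, (Nat.div_lt_iff_lt_mul hm).mpr (by omega)⟩ with ht
        have hgl : (fun i => construct G m i (σ j)) =
            (fun i : Fin (k+1) => if hi : (i:ℕ) < k then G ⟨i,hi⟩ t else 0) := by
          funext i
          rw [construct_col2 G i (σ j) hns h2 t rfl]
        rw [hgl] at h1
        have hKval := congrFun h1 ⟨k, k.lt_succ_self⟩
        simp only [construct_col1 H _ j hj, Pi.smul_apply, smul_eq_mul] at hKval
        rw [hC3 t, mul_zero] at hKval
        simp at hKval
      · have hgl : (fun i => construct G m i (σ j)) = eVec k F := by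
          funext i
          rw [construct_col3 G i (σ j) (by omega)]
          rfl
        rw [hgl, hSe] at h1
        apply hHnz ⟨j, hj⟩
        funext i
        have hi := congrFun h1 ⟨i, by omega⟩
        simp only [construct_col1 H _ j hj, dif_pos i.isLt, Pi.smul_apply, smul_eq_mul] at hi
        simp [eVec, i.isLt] at hi
        simpa using hi
    refine ⟨hσn, ?_⟩
    set t' : Fin n := ⟨(σ j : ℕ), hσn⟩ with ht'
    have hgl : (fun i => construct G m i (σ j)) =
        (fun i : Fin (k+1) => if hi : (i:ℕ) < k then G ⟨i,hi⟩ t' else 0) + eVec k F := by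
      funext i
      rw [construct_col1 G i (σ j) hσn]
      by_cases hi : (i:ℕ) < k
      · simp only [Pi.add_apply, dif_pos hi, eVec, if_pos hi, add_zero, ht']
      · simp only [Pi.add_apply, dif_neg hi, eVec, if_neg hi, zero_add]
    rw [hgl, Matrix.mulVec_add, hSe] at h1
    have hKval := congrFun h1 ⟨k, k.lt_succ_self⟩
    simp only [construct_col1 H _ j hj, Pi.smul_apply, Pi.add_apply, smul_eq_mul] at hKval
    rw [hC3 t'] at hKval
    simp [eVec] at hKval
    -- hKval : 1 = d j * c⁻¹  (up to form)
    field_simp at hKval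
    exact hKval.symm
  -- build the permutation
  have hσlt : ∀ t : Fin n, (σ (Fin.castLE hnle t) : ℕ) < n := fun t =>
    (hblk (Fin.castLE hnle t) (by simpa using t.isLt)).1
  set σ' : Fin n → Fin n := fun t => ⟨(σ (Fin.castLE hnle t) : ℕ), hσlt t⟩ with hσ'
  have hinj : Function.Injective σ' := by
    intro x y hxy
    have hv : (σ' x : ℕ) = (σ' y : ℕ) := congrArg Fin.val hxy
    have h1 : σ (Fin.castLE hnle x) = σ (Fin.castLE hnle y) := Fin.ext hv
    have h2 : (Fin.castLE hnle x : ℕ) = (Fin.castLE hnle y : ℕ) :=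
      congrArg Fin.val (σ.injective h1)
    exact Fin.ext h2
  have hbij := Finite.injective_iff_bijective.mp hinj
  refine ⟨c, hc0, fun i j => if i = Equiv.ofBijective σ' hbij j then 1 else 0,
    ⟨Equiv.ofBijective σ' hbij, fun i j => rfl⟩, ?_⟩
  show M'.submatrix (Fin.castLE hnle) (Fin.castLE hnle) = _
  ext i j
  simp only [Matrix.submatrix_apply, Matrix.smul_apply, smul_eq_mul]
  rw [hMd]
  show _ = c * (if i = Equiv.ofBijective σ' hbij j then (1:F) else 0)
  have hcond : (Fin.castLE hnle i = σ (Fin.castLE hnle j)) ↔ i = Equiv.ofBijective σ' hbij j := by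
    rw [Equiv.ofBijective_apply, hσ']
    constructor
    · intro h
      exact Fin.ext (by simpa using congrArg Fin.val h)
    · intro h
      have h2 := congrArg Fin.val h
      simp only [Fin.coe_castLE] at h2 ⊢
      exact Fin.ext (by simpa using h2)
  by_cases hij : i = Equiv.ofBijective σ' hbij j
  · rw [if_pos (hcond.mpr hij), if_pos hij,
      (hblk (Fin.castLE hnle j) (by simpa using j.isLt)).2, mul_one]
  · rw [if_neg (fun hcl => hij (hcond.mp hcl)), if_neg hij, mul_zero]
end
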